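/- arXiv:1111.4475 — 9 statements merged into one kernel-verified Lean document; each statement's English description precedes it below -/
import Mathlib

section
/- Splitting lemma (real-analytic version): identify a monic complex polynomial z^n + ∑_{j=1}^n (−1)^j a_j z^{n−j} with its coefficient vector a = (a_1,…,a_n) ∈ ℂ^n. Let P_0 be a monic polynomial of degree n with P_0 = P_1^0 · P_2^0, where P_1^0 and P_2^0 are monic of degrees p and n−p respectively and have no common root. Then there exist an open neighborhood U of the coefficient vector of P_0 in ℂ^n and real-analytic maps b : U → ℂ^p and c : U → ℂ^{n−p} such that b and c take at P_0 the values given by the coefficient vectors of P_1^0 and P_2^0, and for every a ∈ U the monic polynomial with coefficient vector a equals the product of the monic polynomials with coefficient vectors b(a) and c(a). -/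
/-!
The map sending `(b, c)` to the coefficient vector of `monicPoly p b * monicPoly q c` is
polynomial, hence complex-analytic. Writing `P₀ = monicPoly p b₀`, `Q₀ = monicPoly q c₀`, its
derivative at `(b₀, c₀)` is the Sylvester map `(β, γ) ↦ β Q₀ + P₀ γ` on polynomials of degree
`< p` and `< q`. If `β Q₀ + P₀ γ = 0` then `P₀ ∣ β Q₀`, so coprimality and `deg β < p` force
`β = 0` and then `γ = 0`; the derivative is injective, hence invertible by counting dimensions.
The analytic inverse function theorem gives a complex-analytic local inverse near `a₀`, and
complex-analytic maps are real-analytic.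
-/

open Polynomial

/-- The monic polynomial `z^n + ∑_{j=1}^n (-1)^j a_j z^{n-j}`, where `a j` (for `j : Fin n`)
corresponds to the coefficient `a_{j+1}`; it is identified with its coefficient vector
`a ∈ ℂ^n`. -/
noncomputable def monicPoly (n : ℕ) (a : Fin n → ℂ) : Polynomial ℂ :=
  X ^ n + ∑ j : Fin n, C ((-1 : ℂ) ^ ((j : ℕ) + 1) * a j) * X ^ (n - ((j : ℕ) + 1))

noncomputable def tailPoly (m : ℕ) : (Fin m → ℂ) →ₗ[ℂ] ℂ[X] :=
  Fintype.linearCombination ℂ fun j : Fin m =>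
    C ((-1 : ℂ) ^ ((j : ℕ) + 1)) * X ^ (m - ((j : ℕ) + 1))

noncomputable def coeffVec (m : ℕ) : ℂ[X] →ₗ[ℂ] (Fin m → ℂ) :=
  LinearMap.pi fun j : Fin m => ((-1 : ℂ) ^ ((j : ℕ) + 1)) • lcoeff ℂ (m - ((j : ℕ) + 1))

lemma coeffVec_apply (m : ℕ) (R : ℂ[X]) (j : Fin m) :
    coeffVec m R j = (-1 : ℂ) ^ ((j : ℕ) + 1) * R.coeff (m - ((j : ℕ) + 1)) := rfl

lemma monicPoly_eq_X_pow_add_tailPoly (m : ℕ) (b : Fin m → ℂ) :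
    monicPoly m b = X ^ m + tailPoly m b := by
  simp only [monicPoly, tailPoly, Fintype.linearCombination_apply, smul_eq_C_mul, C_mul,
    mul_assoc, mul_left_comm]

lemma degree_tailPoly_lt (m : ℕ) (b : Fin m → ℂ) : (tailPoly m b).degree < m := by
  rw [tailPoly, Fintype.linearCombination_apply]
  refine (degree_sum_le _ _).trans_lt
    ((Finset.sup_lt_iff (WithBot.bot_lt_coe m)).2 fun j _ => ?_)
  rw [smul_eq_C_mul, ← mul_assoc, ← C_mul]
  exact (degree_C_mul_X_pow_le _ _).trans_lt (Nat.cast_lt.mpr (by omega))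

lemma coeffVec_tailPoly (m : ℕ) (b : Fin m → ℂ) : coeffVec m (tailPoly m b) = b := by
  ext i
  simp only [coeffVec_apply, tailPoly, Fintype.linearCombination_apply, finsetSum_coeff,
    smul_eq_C_mul, coeff_C_mul, coeff_X_pow]
  rw [Finset.sum_eq_single i (fun j _ hji => by simp; omega) (by simp)]
  rw [if_pos rfl, mul_one, mul_left_comm, ← mul_pow]
  norm_num

lemma coeffVec_X_pow_self (m : ℕ) : coeffVec m (X ^ m) = 0 := by
  ext i
  simp only [coeffVec_apply, coeff_X_pow, Pi.zero_apply]
  rw [if_neg (by omega), mul_zero]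

lemma coeffVec_monicPoly (m : ℕ) (b : Fin m → ℂ) : coeffVec m (monicPoly m b) = b := by
  rw [monicPoly_eq_X_pow_add_tailPoly, map_add, coeffVec_X_pow_self, coeffVec_tailPoly, zero_add]

lemma degree_monicPoly (m : ℕ) (b : Fin m → ℂ) : (monicPoly m b).degree = m := by
  rw [monicPoly_eq_X_pow_add_tailPoly, degree_add_eq_left_of_degree_lt, degree_X_pow]
  simpa using degree_tailPoly_lt m b

lemma monicPoly_monic (m : ℕ) (b : Fin m → ℂ) : (monicPoly m b).Monic := by
  rw [monicPoly_eq_X_pow_add_tailPoly]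
  exact (monic_X_pow m).add_of_left (by simpa using degree_tailPoly_lt m b)

lemma natDegree_monicPoly (m : ℕ) (b : Fin m → ℂ) : (monicPoly m b).natDegree = m :=
  natDegree_eq_of_degree_eq_some (degree_monicPoly m b)

lemma eq_zero_of_coeffVec_eq_zero {n : ℕ} {S : ℂ[X]} (hS : S.degree < n)
    (h : coeffVec n S = 0) : S = 0 := by
  ext k
  rw [coeff_zero]
  obtain hk | hk := lt_or_ge k n
  · have hj := congrFun h ⟨n - k - 1, by omega⟩
    rw [coeffVec_apply, Pi.zero_apply, show n - (n - k - 1 + 1) = k by omega] at hj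
    exact (mul_eq_zero.mp hj).resolve_left (pow_ne_zero _ (neg_ne_zero.mpr one_ne_zero))
  · exact coeff_eq_zero_of_degree_lt (hS.trans_le (Nat.cast_le.mpr hk))

lemma monicPoly_coeffVec {n : ℕ} {R : ℂ[X]} (hR : R.Monic) (hdeg : R.natDegree = n) :
    monicPoly n (coeffVec n R) = R := by
  have hdeg' : R.degree = n := by rw [degree_eq_natDegree hR.ne_zero, hdeg]
  refine (sub_eq_zero.mp (eq_zero_of_coeffVec_eq_zero (n := n) ?_ ?_)).symm
  · rw [← hdeg']
    exact degree_sub_lt_left (by rw [hdeg', degree_monicPoly]) hR.ne_zero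
      (by rw [hR.leadingCoeff, (monicPoly_monic n _).leadingCoeff])
  · rw [map_sub, coeffVec_monicPoly, sub_self]

lemma isCoprime_of_forall_not_isRoot {K : Type*} [Field K] [IsAlgClosed K] {P Q : K[X]}
    (h : ∀ z : K, ¬ (P.IsRoot z ∧ Q.IsRoot z)) : IsCoprime P Q := by
  rw [isCoprime_iff_aeval_ne_zero_of_isAlgClosed K K]
  intro z
  rw [← not_and_or]
  simpa using h z

lemma IsCoprime.eq_zero_of_mul_add_mul_eq_zero {R : Type*} [CommRing R] [IsDomain R]
    {P Q A B : R[X]} (hPQ : IsCoprime P Q) (hA : A.degree < P.degree) (h : A * Q + P * B = 0) :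
    A = 0 ∧ B = 0 := by
  have hPA : P ∣ A :=
    hPQ.dvd_of_dvd_mul_right ⟨-B, by rw [mul_neg, ← eq_neg_iff_add_eq_zero.mpr h]⟩
  have hA0 : A = 0 := eq_zero_of_dvd_of_degree_lt hPA hA
  have hP0 : P ≠ 0 := fun hP => by simp [hP] at hA
  rw [hA0, zero_mul, zero_add] at h
  exact ⟨hA0, (mul_eq_zero.mp h).resolve_left hP0⟩

lemma degree_mul_lt_add {R : Type*} [Semiring R] {A Q : R[X]} {p q : ℕ} (hA : A.degree < p)
    (hQ : Q.degree = q) : (A * Q).degree < (p + q : ℕ) := by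
  rw [Nat.cast_add]
  exact (degree_mul_le _ _).trans_lt
    (WithBot.add_lt_add_of_lt_of_le (hQ ▸ WithBot.natCast_ne_bot q) hA hQ.le)

noncomputable def sylvesterLin (n p q : ℕ) (P Q : ℂ[X]) :
    (Fin p → ℂ) × (Fin q → ℂ) →ₗ[ℂ] (Fin n → ℂ) :=
  coeffVec n ∘ₗ (LinearMap.mulRight ℂ Q ∘ₗ tailPoly p ∘ₗ LinearMap.fst ℂ _ _ +
    LinearMap.mulLeft ℂ P ∘ₗ tailPoly q ∘ₗ LinearMap.snd ℂ _ _)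

lemma sylvesterLin_apply (n p q : ℕ) (P Q : ℂ[X]) (v : (Fin p → ℂ) × (Fin q → ℂ)) :
    sylvesterLin n p q P Q v = coeffVec n (tailPoly p v.1 * Q + P * tailPoly q v.2) := rfl

lemma sylvesterLin_bijective {n p q : ℕ} (hpq : p + q = n) {P Q : ℂ[X]} (hP : P.degree = p)
    (hQ : Q.degree = q) (hPQ : IsCoprime P Q) : Function.Bijective (sylvesterLin n p q P Q) := by
  have hinj : Function.Injective (sylvesterLin n p q P Q) := by
    refine (injective_iff_map_eq_zero _).2 fun v hv => ?_
    have hdeg : (tailPoly p v.1 * Q + P * tailPoly q v.2).degree < n := by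
      refine (degree_add_le _ _).trans_lt (max_lt ?_ ?_)
      · exact hpq ▸ degree_mul_lt_add (degree_tailPoly_lt p v.1) hQ
      · rw [mul_comm, ← hpq, add_comm p]
        exact degree_mul_lt_add (degree_tailPoly_lt q v.2) hP
    obtain ⟨h1, h2⟩ := hPQ.eq_zero_of_mul_add_mul_eq_zero (hP ▸ degree_tailPoly_lt p v.1)
      (eq_zero_of_coeffVec_eq_zero hdeg hv)
    ext1
    · rw [← coeffVec_tailPoly p v.1, h1, map_zero]; rfl
    · rw [← coeffVec_tailPoly q v.2, h2, map_zero]; rfl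
  refine ⟨hinj, (LinearMap.injective_iff_surjective_of_finrank_eq_finrank ?_).mp hinj⟩
  simp [hpq]

noncomputable def tailMulBilin (n p q : ℕ) :
    (Fin p → ℂ) →L[ℂ] (Fin q → ℂ) →L[ℂ] (Fin n → ℂ) :=
  (((LinearMap.mul ℂ ℂ[X]).compl₁₂ (tailPoly p) (tailPoly q)).compr₂
    (coeffVec n)).toContinuousBilinearMap

noncomputable def monicMulMap (n p q : ℕ) (y : (Fin p → ℂ) × (Fin q → ℂ)) : Fin n → ℂ :=
  coeffVec n (monicPoly p y.1 * monicPoly q y.2)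

/-- Constant, linear and bilinear part: analyticity and the derivative are read off from these. -/
lemma monicMulMap_eq (n p q : ℕ) :
    monicMulMap n p q = fun y => coeffVec n (X ^ p * X ^ q) +
      (sylvesterLin n p q (X ^ p) (X ^ q) y + tailMulBilin n p q y.1 y.2) := by
  funext y
  simp only [monicMulMap, sylvesterLin_apply, tailMulBilin,
    LinearMap.toContinuousBilinearMap_apply, LinearMap.compr₂_apply, LinearMap.compl₁₂_apply,
    LinearMap.mul_apply', ← map_add, monicPoly_eq_X_pow_add_tailPoly]
  congr 1
  ring

lemma analyticAt_monicMulMap (n p q : ℕ) (y : (Fin p → ℂ) × (Fin q → ℂ)) :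
    AnalyticAt ℂ (monicMulMap n p q) y := by
  rw [monicMulMap_eq]
  exact analyticAt_const.add ((sylvesterLin n p q _ _).toContinuousLinearMap.analyticAt y |>.add
    ((tailMulBilin n p q).analyticAt_bilinear y))

lemma hasFDerivAt_monicMulMap (n p q : ℕ) (b : Fin p → ℂ) (c : Fin q → ℂ) :
    HasFDerivAt (monicMulMap n p q)
      (sylvesterLin n p q (monicPoly p b) (monicPoly q c)).toContinuousLinearMap (b, c) := by
  have hB := (tailMulBilin n p q).isBoundedBilinearMap
  rw [monicMulMap_eq]
  refine (((sylvesterLin n p q _ _).toContinuousLinearMap.hasFDerivAt.add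
    (hB.hasFDerivAt (b, c))).const_add _).congr_fderiv (ContinuousLinearMap.ext fun v => ?_)
  rw [add_apply, hB.deriv_apply]
  simp only [LinearMap.coe_toContinuousLinearMap',
    sylvesterLin_apply, tailMulBilin, LinearMap.toContinuousBilinearMap_apply,
    LinearMap.compr₂_apply, LinearMap.compl₁₂_apply, LinearMap.mul_apply', ← map_add,
    monicPoly_eq_X_pow_add_tailPoly]
  congr 1
  ring

lemma monicPoly_monicMulMap {n p q : ℕ} (hpq : p + q = n) (y : (Fin p → ℂ) × (Fin q → ℂ)) :
    monicPoly n (monicMulMap n p q y) = monicPoly p y.1 * monicPoly q y.2 := by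
  refine monicPoly_coeffVec ((monicPoly_monic p _).mul (monicPoly_monic q _)) ?_
  rw [(monicPoly_monic p _).natDegree_mul (monicPoly_monic q _), natDegree_monicPoly,
    natDegree_monicPoly, hpq]

theorem AnalyticAt.exists_analyticOnNhd_rightInverse {𝕜 E F : Type*} [NontriviallyNormedField 𝕜]
    [NormedAddCommGroup E] [NormedSpace 𝕜 E] [CompleteSpace E]
    [NormedAddCommGroup F] [NormedSpace 𝕜 F] {f : E → F} {f' : E ≃L[𝕜] F} {a : E}
    (hf : AnalyticAt 𝕜 f a) (hf' : HasFDerivAt f (f' : E →L[𝕜] F) a) :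
    ∃ U : Set F, IsOpen U ∧ f a ∈ U ∧ ∃ g : F → E,
      AnalyticOnNhd 𝕜 g U ∧ g (f a) = a ∧ ∀ y ∈ U, f (g y) = y := by
  have hstrict : HasStrictFDerivAt f (f' : E →L[𝕜] F) a := hf'.fderiv ▸ hf.hasStrictFDerivAt
  set φ := hstrict.toOpenPartialHomeomorph f
  have hg : AnalyticAt 𝕜 φ.symm (f a) :=
    φ.analyticAt_symm' hstrict.mem_toOpenPartialHomeomorph_source hf hf'.fderiv
  obtain ⟨U, hU, hUo, haU⟩ := eventually_nhds_iff.mp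
    (hg.eventually_analyticAt.and hstrict.eventually_right_inverse)
  exact ⟨U, hUo, haU, φ.symm, fun y hy => (hU y hy).1, hstrict.localInverse_apply_image,
    fun y hy => (hU y hy).2⟩

/-- Splitting lemma (real-analytic version): if a monic polynomial `P₀` of degree `n = p + q`
factors as a product of monic polynomials of degrees `p` and `q` without common root, then
nearby monic polynomials factor accordingly, with factors depending real-analytically on the
coefficient vector. -/
theorem splitting_lemma_real_analytic (n p q : ℕ) (hpq : p + q = n)
    (a0 : Fin n → ℂ) (b0 : Fin p → ℂ) (c0 : Fin q → ℂ)
    (hfac : monicPoly n a0 = monicPoly p b0 * monicPoly q c0)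
    (hnocommon : ∀ z : ℂ, ¬ ((monicPoly p b0).IsRoot z ∧ (monicPoly q c0).IsRoot z)) :
    ∃ U : Set (Fin n → ℂ), IsOpen U ∧ a0 ∈ U ∧
      ∃ b : (Fin n → ℂ) → (Fin p → ℂ), ∃ c : (Fin n → ℂ) → (Fin q → ℂ),
        AnalyticOnNhd ℝ b U ∧ AnalyticOnNhd ℝ c U ∧ b a0 = b0 ∧ c a0 = c0 ∧
        ∀ a ∈ U, monicPoly n a = monicPoly p (b a) * monicPoly q (c a) := by
  have hbij := sylvesterLin_bijective hpq (degree_monicPoly p b0) (degree_monicPoly q c0)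
    (isCoprime_of_forall_not_isRoot hnocommon)
  have ha0 : monicMulMap n p q (b0, c0) = a0 := by
    rw [monicMulMap, ← hfac, coeffVec_monicPoly]
  obtain ⟨U, hUo, ha0U, g, hg, hga0, hgU⟩ :=
    (analyticAt_monicMulMap n p q (b0, c0)).exists_analyticOnNhd_rightInverse
      (f' := (LinearEquiv.ofBijective _ hbij).toContinuousLinearEquiv)
      (hasFDerivAt_monicMulMap n p q b0 c0)
  rw [ha0] at ha0U hga0
  refine ⟨U, hUo, ha0U, fun a => (g a).1, fun a => (g a).2,
    fun a ha => ((ContinuousLinearMap.fst ℂ _ _).analyticAt _).comp (hg a ha) |>.restrictScalars,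
    fun a ha => ((ContinuousLinearMap.snd ℂ _ _).analyticAt _).comp (hg a ha) |>.restrictScalars,
    congrArg Prod.fst hga0, congrArg Prod.snd hga0, fun a ha => ?_⟩
  rw [← monicPoly_monicMulMap hpq, hgU a ha]
end

section
/- Glueing local choices of roots (real-analytic version): let a_1, …, a_n : ℝ → ℂ be real-analytic functions defining the family of monic polynomials P(t)(z) = z^n + ∑_{j=1}^n (−1)^j a_j(t) z^{n−j}. Assume that for every t_0 ∈ ℝ there exist an open interval I_{t_0} ∋ t_0 and real-analytic functions μ_1, …, μ_n : I_{t_0} → ℂ with P(t)(z) = ∏_{j=1}^n (z − μ_j(t)) for all t ∈ I_{t_0}. Then there exist real-analytic functions λ_1, …, λ_n : ℝ → ℂ with P(t)(z) = ∏_{j=1}^n (z − λ_j(t)) for all t ∈ ℝ. -/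
/-!
At each point, a root of one analytic parameterization of the roots is a root of any other, so
by the identity theorem two parameterizations on a connected open set differ by one fixed
permutation; local parameterizations therefore glue across a connected overlap once one of them
is re-indexed. Fix a local parameterization near `0`: the set of points `t` to which it continues
analytically along an interval is open, and it is closed because the local parameterization at a
limit point glues onto it, so it is all of `ℝ`. Continuations to different points agree near `0`,
hence on their common interval, and so they assemble into a global parameterization.
-/

open Polynomial

open Set Filter Topology

section

variable {𝕜 : Type*} [NontriviallyNormedField 𝕜]

theorem AnalyticOnNhd.exists_eqOn_of_forall_exists_eq {E ι : Type*} [NormedAddCommGroup E]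
    [NormedSpace 𝕜 E] [Finite ι] {f : ι → 𝕜 → E} {g : 𝕜 → E} {U : Set 𝕜} {z₀ : 𝕜}
    (hf : ∀ i, AnalyticOnNhd 𝕜 (f i) U) (hg : AnalyticOnNhd 𝕜 g U) (hU : IsOpen U)
    (hU' : IsPreconnected U) (h₀ : z₀ ∈ U) (h : ∀ z ∈ U, ∃ i, g z = f i z) :
    ∃ i, EqOn g (f i) U := by
  have hfreq : ∃ᶠ z in 𝓝[≠] z₀, ∃ i, g z = f i z :=
    (eventually_nhdsWithin_of_eventually_nhds (hU.mem_nhds h₀)).mono h |>.frequently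
  obtain ⟨i, hi⟩ := frequently_exists.mp hfreq
  exact ⟨i, hg.eqOn_of_preconnected_of_frequently_eq (hf i) hU' h₀ hi⟩

variable {K : Type*} [NormedField K] [NormedSpace 𝕜 K]

def AnalyticRootsOn {ι : Type*} [Fintype ι] (P : 𝕜 → K[X]) (f : ι → 𝕜 → K) (U : Set 𝕜) :
    Prop :=
  (∀ j, AnalyticOnNhd 𝕜 (f j) U) ∧ ∀ z ∈ U, P z = ∏ j, (X - C (f j z))

namespace AnalyticRootsOn

variable {ι : Type*} [Fintype ι] {P : 𝕜 → K[X]} {f g : ι → 𝕜 → K} {U V : Set 𝕜}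

theorem mono (hf : AnalyticRootsOn P f U) (hVU : V ⊆ U) : AnalyticRootsOn P f V :=
  ⟨fun j => (hf.1 j).mono hVU, fun z hz => hf.2 z (hVU hz)⟩

theorem comp_perm (hf : AnalyticRootsOn P f U) (σ : Equiv.Perm ι) :
    AnalyticRootsOn P (fun j => f (σ j)) U :=
  ⟨fun j => hf.1 (σ j), fun z hz => by
    rw [hf.2 z hz, ← Equiv.prod_comp σ (fun j => X - C (f j z))]⟩

theorem congr (hf : AnalyticRootsOn P f U) (hU : IsOpen U) (hfg : ∀ j, EqOn (f j) (g j) U) :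
    AnalyticRootsOn P g U :=
  ⟨fun j => (hf.1 j).congr hU (hfg j), fun z hz => by
    simp only [hf.2 z hz, hfg _ hz]⟩

theorem union (hfU : AnalyticRootsOn P f U) (hfV : AnalyticRootsOn P f V) :
    AnalyticRootsOn P f (U ∪ V) :=
  ⟨fun j z hz => hz.elim (hfU.1 j z) (hfV.1 j z),
    fun z hz => hz.elim (hfU.2 z) (hfV.2 z)⟩

theorem exists_perm_eqOn (hU : IsOpen U) (hU' : IsPreconnected U) (hne : U.Nonempty) {n : ℕ}
    {f g : Fin n → 𝕜 → K} (hf : AnalyticRootsOn P f U) (hg : AnalyticRootsOn P g U) :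
    ∃ σ : Equiv.Perm (Fin n), ∀ j, EqOn (g j) (f (σ j)) U := by
  induction n generalizing P with
  | zero => exact ⟨1, fun j => j.elim0⟩
  | succ n ih =>
    obtain ⟨z₀, hz₀⟩ := hne
    have hroot : ∀ z ∈ U, ∃ i, g (Fin.last n) z = f i z := by
      intro z hz
      have hzero : (∏ i, (X - C (f i z))).IsRoot (g (Fin.last n) z) := by
        rw [← hf.2 z hz, hg.2 z hz, IsRoot, eval_prod]
        exact Finset.prod_eq_zero (Finset.mem_univ (Fin.last n)) (by simp)
      simpa [IsRoot, eval_prod, Finset.prod_eq_zero_iff, sub_eq_zero] using hzero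
    obtain ⟨i, hi⟩ := AnalyticOnNhd.exists_eqOn_of_forall_exists_eq hf.1 (hg.1 _) hU hU' hz₀
      hroot
    have hf' : AnalyticRootsOn (fun z => ∏ k : Fin n, (X - C (f (i.succAbove k) z)))
        (fun k => f (i.succAbove k)) U := ⟨fun k => hf.1 _, fun _ _ => rfl⟩
    have hg' : AnalyticRootsOn (fun z => ∏ k : Fin n, (X - C (f (i.succAbove k) z)))
        (fun k : Fin n => g k.castSucc) U := by
      refine ⟨fun k => hg.1 _, fun z hz => mul_left_cancel₀ (X_sub_C_ne_zero (f i z)) ?_⟩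
      rw [← Fin.prod_univ_succAbove (fun k => X - C (f k z)) i, ← hf.2 z hz, hg.2 z hz,
        Fin.prod_univ_castSucc, hi hz, mul_comm]
    obtain ⟨σ, hσ⟩ := ih hf' hg'
    -- the permutation sending `last` to `i` and `k.castSucc` to `i.succAbove (σ k)`
    refine ⟨(finSuccEquivLast.trans (Equiv.optionCongr σ)).trans (finSuccEquiv' i).symm,
      Fin.lastCases ?_ fun k => ?_⟩
    · simpa using hi
    · simpa using hσ k

theorem glue {n : ℕ} {f g : Fin n → 𝕜 → K} (hf : AnalyticRootsOn P f U)
    (hg : AnalyticRootsOn P g V) (hU : IsOpen U) (hV : IsOpen V)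
    (hUV : IsPreconnected (U ∩ V)) (hUV' : (U ∩ V).Nonempty) :
    ∃ h : Fin n → 𝕜 → K, AnalyticRootsOn P h (U ∪ V) ∧ ∀ j, EqOn (h j) (f j) U := by
  classical
  obtain ⟨σ, hσ⟩ := exists_perm_eqOn (hU.inter hV) hUV hUV' (hg.mono inter_subset_right)
    (hf.mono inter_subset_left)
  refine ⟨fun j => U.piecewise (f j) (g (σ j)), ?_, fun j => U.piecewise_eqOn _ _⟩
  have hhV : ∀ j, EqOn (g (σ j)) (U.piecewise (f j) (g (σ j))) V := by
    intro j z hz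
    by_cases hzU : z ∈ U
    · rw [piecewise_eq_of_mem _ _ _ hzU, hσ j ⟨hzU, hz⟩]
    · rw [piecewise_eq_of_notMem _ _ _ hzU]
  exact (hf.congr hU fun j => (U.piecewise_eqOn _ _).symm).union
    ((hg.comp_perm σ).congr hV hhV)

end AnalyticRootsOn

end

section

variable {K : Type*} [NormedField K] [NormedSpace ℝ K] {n : ℕ} {P : ℝ → K[X]} {x₀ : ℝ}
  {φ : Fin n → ℝ → K}

/-- The germ `φ` at `x₀` of a parameterization of the roots of `P` continues analytically along
the segment between `x₀` and `t`. -/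
def RootGermContinuesTo (P : ℝ → K[X]) (x₀ : ℝ) (φ : Fin n → ℝ → K) (t : ℝ) : Prop :=
  ∃ V : Set ℝ, IsOpen V ∧ V.OrdConnected ∧ x₀ ∈ V ∧ t ∈ V ∧
    ∃ g : Fin n → ℝ → K, AnalyticRootsOn P g V ∧ ∀ j, g j =ᶠ[𝓝 x₀] φ j

theorem RootGermContinuesTo.extend {s t : ℝ} {I : Set ℝ} {f : Fin n → ℝ → K}
    (hs : RootGermContinuesTo P x₀ φ s) (hf : AnalyticRootsOn P f I) (hI : IsOpen I)
    (hI' : I.OrdConnected) (hsI : s ∈ I) (htI : t ∈ I) : RootGermContinuesTo P x₀ φ t := by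
  obtain ⟨V, hV, hV', hx₀V, hsV, g, hg, hgφ⟩ := hs
  obtain ⟨h, hh, hhg⟩ := hg.glue hf hV hI (hV'.inter hI').isPreconnected ⟨s, hsV, hsI⟩
  refine ⟨V ∪ I, hV.union hI, ?_, Or.inl hx₀V, Or.inr htI, h, hh, fun j => ?_⟩
  · exact isPreconnected_iff_ordConnected.mp
      (hV'.isPreconnected.union s hsV hsI hI'.isPreconnected)
  · exact (eventuallyEq_of_mem (hV.mem_nhds hx₀V) (hhg j)).trans (hgφ j)

theorem isOpen_setOf_rootGermContinuesTo : IsOpen {t | RootGermContinuesTo P x₀ φ t} := by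
  refine isOpen_iff_mem_nhds.mpr fun t ⟨V, hV, hV', hx₀V, htV, g, hg, hgφ⟩ => ?_
  filter_upwards [hV.mem_nhds htV] with s hsV
  exact ⟨V, hV, hV', hx₀V, hsV, g, hg, hgφ⟩

theorem isClosed_setOf_rootGermContinuesTo
    (hloc : ∀ t, ∃ U ∈ 𝓝 t, ∃ f : Fin n → ℝ → K, AnalyticRootsOn P f U) :
    IsClosed {t | RootGermContinuesTo P x₀ φ t} := by
  refine isOpen_compl_iff.mp (isOpen_iff_mem_nhds.mpr fun t ht => ?_)
  obtain ⟨U, hU, f, hf⟩ := hloc t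
  obtain ⟨c, d, htI, hIU⟩ := mem_nhds_iff_exists_Ioo_subset.mp hU
  filter_upwards [isOpen_Ioo.mem_nhds htI] with s hsI hs
  exact ht (hs.extend (hf.mono hIU) isOpen_Ioo ordConnected_Ioo hsI htI)

theorem exists_analyticRootsOn_univ_of_forall_rootGermContinuesTo
    (h : ∀ t, RootGermContinuesTo P x₀ φ t) : ∃ l : Fin n → ℝ → K, AnalyticRootsOn P l univ := by
  choose V hV hV' hx₀V htV g hg hgφ using h
  have hcompat : ∀ s t j, EqOn (g s j) (g t j) (V s ∩ V t) := fun s t j =>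
    (((hg s).1 j).mono inter_subset_left).eqOn_of_preconnected_of_eventuallyEq
      (((hg t).1 j).mono inter_subset_right) ((hV' s).inter (hV' t)).isPreconnected
      ⟨hx₀V s, hx₀V t⟩ ((hgφ s j).trans (hgφ t j).symm)
  refine ⟨fun j t => g t j t, fun j t _ => ?_, fun t _ => (hg t).2 t (htV t)⟩
  refine ((hg t).1 j t (htV t)).congr (eventuallyEq_of_mem ((hV t).mem_nhds (htV t)) ?_)
  exact fun s hs => hcompat t s j ⟨hs, htV s⟩

theorem exists_analyticRootsOn_univ
    (hloc : ∀ t, ∃ U ∈ 𝓝 t, ∃ f : Fin n → ℝ → K, AnalyticRootsOn P f U) :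
    ∃ l : Fin n → ℝ → K, AnalyticRootsOn P l univ := by
  obtain ⟨U, hU, φ, hφ⟩ := hloc 0
  obtain ⟨c, d, h0I, hIU⟩ := mem_nhds_iff_exists_Ioo_subset.mp hU
  have h0 : RootGermContinuesTo P 0 φ 0 :=
    ⟨Ioo c d, isOpen_Ioo, ordConnected_Ioo, h0I, h0I, φ, hφ.mono hIU, fun _ => .rfl⟩
  have hclopen : IsClopen {t | RootGermContinuesTo P 0 φ t} :=
    ⟨isClosed_setOf_rootGermContinuesTo hloc, isOpen_setOf_rootGermContinuesTo⟩
  exact exists_analyticRootsOn_univ_of_forall_rootGermContinuesTo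
    (eq_univ_iff_forall.mp (hclopen.eq_univ ⟨0, h0⟩))

end

theorem glue_local_roots_real_analytic_general (n : ℕ)
    (a : Fin n → ℝ → ℂ)
    (hloc : ∀ t0 : ℝ, ∃ α β : ℝ, α < t0 ∧ t0 < β ∧
      ∃ μ : Fin n → ℝ → ℂ, (∀ j, AnalyticOnNhd ℝ (μ j) (Set.Ioo α β)) ∧
        ∀ t ∈ Set.Ioo α β,
          monicPoly n (fun j => a j t) = ∏ j : Fin n, (X - C (μ j t))) :
    ∃ l : Fin n → ℝ → ℂ, (∀ j, ∀ t : ℝ, AnalyticAt ℝ (l j) t) ∧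
      ∀ t : ℝ, monicPoly n (fun j => a j t) = ∏ j : Fin n, (X - C (l j t)) := by
  obtain ⟨l, hl⟩ := exists_analyticRootsOn_univ (P := fun t => monicPoly n fun j => a j t)
    fun t₀ => by
      obtain ⟨α, β, hα, hβ, μ, hμ⟩ := hloc t₀
      exact ⟨Ioo α β, Ioo_mem_nhds hα hβ, μ, hμ⟩
  exact ⟨l, fun j t => hl.1 j t (mem_univ t), fun t => hl.2 t (mem_univ t)⟩

/-- Glueing local choices of roots (real-analytic version): if a family of monic polynomials
with real-analytic coefficients on `ℝ` admits, around each point, a local real-analytic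
parameterization of its roots, then it admits a global real-analytic parameterization of
its roots on all of `ℝ`. -/
theorem glue_local_roots_real_analytic (n : ℕ)
    (a : Fin n → ℝ → ℂ) (ha : ∀ j, ∀ t : ℝ, AnalyticAt ℝ (a j) t)
    (hloc : ∀ t0 : ℝ, ∃ α β : ℝ, α < t0 ∧ t0 < β ∧
      ∃ μ : Fin n → ℝ → ℂ, (∀ j, AnalyticOnNhd ℝ (μ j) (Set.Ioo α β)) ∧
        ∀ t ∈ Set.Ioo α β,
          monicPoly n (fun j => a j t) = ∏ j : Fin n, (X - C (μ j t))) :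
    ∃ l : Fin n → ℝ → ℂ, (∀ j, ∀ t : ℝ, AnalyticAt ℝ (l j) t) ∧
      ∀ t : ℝ, monicPoly n (fun j => a j t) = ∏ j : Fin n, (X - C (l j t)) :=
  glue_local_roots_real_analytic_general n a hloc
end

section
/- Uniqueness of root parameterizations up to a constant permutation (real-analytic version): let I ⊆ ℝ be an open interval (in particular connected), and let f_1, …, f_n : I → ℂ and g_1, …, g_n : I → ℂ be real-analytic functions such that for every t ∈ I and every z ∈ ℂ the number of indices j with f_j(t) = z equals the number of indices j with g_j(t) = z. Then there exists a permutation σ of {1, …, n} such that g_j = f_{σ(j)} on all of I, for every j. -/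
/-!
For each pair `(i, j)`, the analytic functions `f i` and `g j` either agree on all of `I` or
differ off a discrete subset of `I`. With finitely many pairs there is a point `t ∈ I` avoiding
all these exceptional sets, so `f i t = g j t` already forces `f i = g j` on `I`. The permutation
matching the values at that single point, which exists by the multiplicity hypothesis at `t`,
then works on all of `I`.
-/

open Filter Set Topology

theorem exists_equiv_apply_eq_of_card_fiber_eq {α β γ : Type*} [Finite α] [Finite β]
    {f : α → γ} {g : β → γ}
    (h : ∀ c, Nat.card {a // f a = c} = Nat.card {b // g b = c}) :
    ∃ e : α ≃ β, ∀ a, g (e a) = f a :=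
  ⟨Equiv.ofFiberEquiv fun c ↦ (Finite.card_eq.mp (h c)).some, Equiv.ofFiberEquiv_map _⟩

theorem Filter.codiscreteWithin_neBot_of_mem_nhds {X : Type*} [TopologicalSpace X] {U : Set X}
    {x : X} (hU : U ∈ 𝓝 x) [(𝓝[≠] x).NeBot] : (codiscreteWithin U).NeBot := by
  have hx : 𝓝[≠] x ≤ codiscreteWithin U :=
    calc 𝓝[≠] x = 𝓝[U \ {x}] x := by
          rw [sdiff_eq_compl_inter, nhdsWithin_inter_of_mem' (mem_nhdsWithin_of_mem_nhds hU)]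
      _ ≤ codiscreteWithin U := le_iSup₂_of_le x (mem_of_mem_nhds hU) le_rfl
  exact NeBot.mono ‹_› hx

theorem eventually_codiscreteWithin_eq_imp_eqOn {𝕜 E ι κ : Type*} [NontriviallyNormedField 𝕜]
    [NormedAddCommGroup E] [NormedSpace 𝕜 E] [Finite ι] [Finite κ] {U : Set 𝕜}
    {f : ι → 𝕜 → E} {g : κ → 𝕜 → E} (hf : ∀ i, AnalyticOnNhd 𝕜 (f i) U)
    (hg : ∀ j, AnalyticOnNhd 𝕜 (g j) U) (hU : IsPreconnected U) :
    ∀ᶠ t in codiscreteWithin U, ∀ i j, f i t = g j t → EqOn (f i) (g j) U := by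
  refine eventually_all.mpr fun i ↦ eventually_all.mpr fun j ↦ ?_
  rcases (hf i).eqOn_or_eventually_ne_of_preconnected (hg j) hU with hfg | hfg
  · exact .of_forall fun _ _ ↦ hfg
  · exact hfg.mono fun _ hne heq ↦ absurd heq hne

/-- Uniqueness of root parameterizations up to a constant permutation (real-analytic version):
if two families of real-analytic functions on an open interval `I ⊆ ℝ` (an open preconnected
subset of `ℝ`) take every complex value with the same multiplicities at every point of `I`,
then they differ by a constant permutation. -/
theorem roots_unique_up_to_constant_permutation (n : ℕ)
    (I : Set ℝ) (hIopen : IsOpen I) (hIconn : IsPreconnected I)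
    (f g : Fin n → ℝ → ℂ)
    (hf : ∀ j, AnalyticOnNhd ℝ (f j) I) (hg : ∀ j, AnalyticOnNhd ℝ (g j) I)
    (hcard : ∀ t ∈ I, ∀ z : ℂ,
      Nat.card {j : Fin n // f j t = z} = Nat.card {j : Fin n // g j t = z}) :
    ∃ σ : Equiv.Perm (Fin n), ∀ j : Fin n, ∀ t ∈ I, g j t = f (σ j) t := by
  rcases I.eq_empty_or_nonempty with rfl | ⟨t₀, ht₀⟩
  · exact ⟨1, fun _ _ ↦ False.elim⟩
  have := codiscreteWithin_neBot_of_mem_nhds (hIopen.mem_nhds ht₀)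
  obtain ⟨t, htI, hgeneric⟩ := (Eventually.and (self_mem_codiscreteWithin I)
    (eventually_codiscreteWithin_eq_imp_eqOn hf hg hIconn)).exists
  obtain ⟨σ, hσ⟩ := exists_equiv_apply_eq_of_card_fiber_eq fun z ↦ (hcard t htI z).symm
  exact ⟨σ, fun j ↦ (hgeneric (σ j) j (hσ j)).symm⟩
end

section
/- Continuous eigenvalue parameterizations of Lipschitz curves of normal matrices are Lipschitz: let A : ℝ → M_n(ℂ) be a locally Lipschitz map (with respect to the operator norm on M_n(ℂ)) such that A(t) is normal for every t ∈ ℝ, and let λ_1, …, λ_n : ℝ → ℂ be continuous functions such that for every t ∈ ℝ the multiset {λ_1(t), …, λ_n(t)} equals the multiset of roots, counted with multiplicity, of the characteristic polynomial of A(t). Then each λ_j is locally Lipschitz. -/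
/-!
For a normal element `a` of a C⋆-algebra, `‖(z - a)⁻¹‖` is the reciprocal of the distance from
`z` to the spectrum of `a`, so a Neumann series shows that every spectral value of `b` lies within
`‖b - a‖` of the spectrum of `a`. At a time `t`, the value `λⱼ(t)` is isolated in the finite
spectrum of `A(t)`; by continuity of `λⱼ`, for `s` near `t` the eigenvalue of `A(t)` closest to
`λⱼ(s)` must be `λⱼ(t)` itself, whence `|λⱼ(s) - λⱼ(t)| ≤ ‖A(s) - A(t)‖ ≤ K |s - t|`. A function
of a real variable obeying such a pointwise bound at every point of an interval is `K`-Lipschitz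
there, by the mean value inequality for upper right Dini derivatives.
-/

open Matrix

/-- The operator norm of a complex `n × n` matrix, i.e. the norm of the induced continuous
linear endomorphism of the Euclidean space `ℂ^n`. -/
noncomputable def matrixOpNorm {n : ℕ} (M : Matrix (Fin n) (Fin n) ℂ) : ℝ :=
  ‖Matrix.toEuclideanCLM (𝕜 := ℂ) M‖

open Filter Topology Metric Set
open scoped Matrix.Norms.L2Operator

theorem IsStarNormal.exists_mem_spectrum_norm_sub_le {A : Type*} [CStarAlgebra A] {a b : A}
    [IsStarNormal a] {z : ℂ} (hz : z ∈ spectrum ℂ b) :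
    ∃ w ∈ spectrum ℂ a, ‖z - w‖ ≤ ‖b - a‖ := by
  by_contra! hfar
  have hza : z ∉ spectrum ℂ a := fun hz' => by simpa using (norm_nonneg _).trans_lt (hfar z hz')
  have hr : 0 < ‖b - a‖ := by
    rw [norm_pos_iff, sub_ne_zero]
    rintro rfl
    exact hza hz
  have hne : ∀ w ∈ spectrum ℂ a, z - w ≠ 0 := fun w hw h => hza (sub_eq_zero.mp h ▸ hw)
  let u := cfcUnits (fun w => z - w) a hne
  have hu : (u : A) = algebraMap ℂ A z - a := by
    change cfc (fun w => z - w) a = _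
    rw [cfc_sub (fun _ => z) (fun w => w) a, cfc_const z a, cfc_id' ℂ a]
  have hinv : ‖(↑u⁻¹ : A)‖ < ‖b - a‖⁻¹ := by
    refine norm_cfc_lt (inv_pos.mpr hr) fun w hw => ?_
    rw [norm_inv]
    exact inv_strictAnti₀ hr (hfar w hw)
  have hsmall : ‖(↑u⁻¹ : A) * (b - a)‖ < 1 :=
    calc ‖(↑u⁻¹ : A) * (b - a)‖ ≤ ‖(↑u⁻¹ : A)‖ * ‖b - a‖ := norm_mul_le _ _
      _ < ‖b - a‖⁻¹ * ‖b - a‖ := by gcongr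
      _ = 1 := inv_mul_cancel₀ hr.ne'
  have hfactor : algebraMap ℂ A z - b = u * (1 - (↑u⁻¹ : A) * (b - a)) := by
    rw [mul_sub, mul_one, ← mul_assoc, Units.mul_inv, one_mul, hu]
    abel
  exact spectrum.mem_iff.mp hz
    (hfactor ▸ u.isUnit.mul (isUnit_one_sub_of_norm_lt_one hsmall))

theorem eventually_dist_le_dist_of_mem_spectrum {X A : Type*} [TopologicalSpace X]
    [CStarAlgebra A] {a : X → A} {f : X → ℂ} {x : X} (ha : ContinuousAt a x)
    (hf : ContinuousAt f x) (hnormal : IsStarNormal (a x))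
    (hfinite : (spectrum ℂ (a x)).Finite) (hmem : ∀ᶠ y in 𝓝 x, f y ∈ spectrum ℂ (a y)) :
    ∀ᶠ y in 𝓝 x, dist (f y) (f x) ≤ dist (a y) (a x) := by
  obtain ⟨ε, hε, hisolated⟩ : ∃ ε > 0, ∀ w ∈ spectrum ℂ (a x), dist w (f x) < ε → w = f x := by
    have hclosed : IsClosed (spectrum ℂ (a x) \ {f x}) := (hfinite.subset sdiff_subset).isClosed
    obtain ⟨ε, hε, hball⟩ := Metric.isOpen_iff.mp hclosed.isOpen_compl (f x) (by simp)
    exact ⟨ε, hε, fun w hw hwε => by_contra fun hne => hball hwε ⟨hw, hne⟩⟩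
  filter_upwards [hmem, ha (ball_mem_nhds _ (half_pos hε)),
    hf (ball_mem_nhds _ (half_pos hε))] with y hy hay hfy
  obtain ⟨w, hw, hdist⟩ := hnormal.exists_mem_spectrum_norm_sub_le hy
  rw [← dist_eq_norm, ← dist_eq_norm] at hdist
  suffices w = f x by rwa [← this]
  refine hisolated w hw ?_
  calc dist w (f x) ≤ dist (f y) w + dist (f y) (f x) := dist_triangle_left _ _ _
    _ < ε / 2 + ε / 2 := add_lt_add (hdist.trans_lt hay) hfy
    _ = ε := add_halves ε

theorem LipschitzOnWith.of_eventually_dist_le {E : Type*} [PseudoMetricSpace E] {f : ℝ → E}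
    {s : Set ℝ} {K : NNReal} (hs : s.OrdConnected)
    (h : ∀ x ∈ s, ∀ᶠ y in 𝓝 x, dist (f y) (f x) ≤ K * dist y x) : LipschitzOnWith K f s := by
  have hcont : ContinuousOn f s := fun x hx => by
    obtain ⟨r, hr, hball⟩ := Metric.eventually_nhds_iff.mp (h x hx)
    exact (continuousAt_of_locally_lipschitz hr K hball).continuousWithinAt
  suffices ∀ x ∈ s, ∀ y ∈ s, x ≤ y → dist (f y) (f x) ≤ K * (y - x) by
    refine LipschitzOnWith.of_dist_le_mul fun x hx y hy => ?_
    rcases le_total x y with hxy | hyx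
    · rw [dist_comm, Real.dist_eq, abs_of_nonpos (sub_nonpos.mpr hxy), neg_sub]
      exact this x hx y hy hxy
    · rw [Real.dist_eq, abs_of_nonneg (sub_nonneg.mpr hyx)]
      exact this y hy x hx hyx
  intro x hx y hy hxy
  have hIcc : Icc x y ⊆ s := hs.out hx hy
  refine image_le_of_liminf_slope_right_le_deriv_boundary (f := fun z => dist (f z) (f x))
    (B := fun z => K * (z - x)) (B' := fun _ => K)
    (continuous_dist.comp_continuousOn ((hcont.mono hIcc).prodMk continuousOn_const)) (by simp)
    (by fun_prop) (fun z _ => ?_) (fun z hz r hr => ?_) (right_mem_Icc.mpr hxy)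
  · simpa using ((hasDerivAt_id z).sub_const x).const_mul (K : ℝ) |>.hasDerivWithinAt
  · have hlip : ∀ᶠ w in 𝓝[>] z, dist (f w) (f z) ≤ K * dist w z :=
      nhdsWithin_le_nhds (h z (hIcc (Ico_subset_Icc_self hz)))
    refine Eventually.frequently ?_
    filter_upwards [hlip, self_mem_nhdsWithin] with w hw hzw
    have hzw : 0 < w - z := sub_pos.mpr hzw
    rw [slope_def_field, div_lt_iff₀ hzw]
    calc dist (f w) (f x) - dist (f z) (f x) ≤ dist (f w) (f z) := by
          linarith [dist_triangle (f w) (f z) (f x)]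
      _ ≤ K * (w - z) := by rwa [Real.dist_eq, abs_of_pos hzw] at hw
      _ < r * (w - z) := by gcongr

/-- Continuous eigenvalue parameterizations of locally Lipschitz (operator norm) curves of
normal matrices are locally Lipschitz. -/
theorem continuous_eigenvalues_of_lipschitz_normal_curve_are_lipschitz (n : ℕ)
    (A : ℝ → Matrix (Fin n) (Fin n) ℂ)
    (hLip : ∀ t0 : ℝ, ∃ K : ℝ, ∃ ε : ℝ, 0 < ε ∧ ∀ s t : ℝ,
      |s - t0| < ε → |t - t0| < ε → matrixOpNorm (A s - A t) ≤ K * |s - t|)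
    (hnormal : ∀ t : ℝ, A t * (A t)ᴴ = (A t)ᴴ * A t)
    (l : Fin n → ℝ → ℂ) (hcont : ∀ j, Continuous (l j))
    (hroots : ∀ t : ℝ, ((A t).charpoly).roots = Finset.univ.val.map (fun j => l j t)) :
    ∀ j : Fin n, ∀ t0 : ℝ, ∃ K : ℝ, ∃ ε : ℝ, 0 < ε ∧ ∀ s t : ℝ,
      |s - t0| < ε → |t - t0| < ε → ‖l j s - l j t‖ ≤ K * |s - t| := by
  intro j t0
  obtain ⟨K, ε, hε, hA⟩ := hLip t0
  have hAlip : LipschitzOnWith K.toNNReal A (ball t0 ε) :=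
    .of_dist_le' fun s hs t ht => by
      rw [dist_eq_norm, Real.dist_eq]
      exact hA s t (mem_ball.mp hs) (mem_ball.mp ht)
  have hspec (t : ℝ) : l j t ∈ spectrum ℂ (A t) :=
    Matrix.mem_spectrum_iff_isRoot_charpoly.mpr <| Polynomial.isRoot_of_mem_roots <|
      hroots t ▸ Multiset.mem_map_of_mem _ (Finset.mem_univ_val j)
  have hlip : LipschitzOnWith K.toNNReal (l j) (ball t0 ε) := by
    refine .of_eventually_dist_le (convex_ball t0 ε).ordConnected fun t ht => ?_
    have hAt : ContinuousAt A t :=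
      (hAlip.continuousOn t ht).continuousAt (isOpen_ball.mem_nhds ht)
    filter_upwards [eventually_dist_le_dist_of_mem_spectrum hAt (hcont j).continuousAt
      ⟨(hnormal t).symm⟩ (A t).finite_spectrum (.of_forall hspec), isOpen_ball.mem_nhds ht]
      with s hs hs_ball
    exact hs.trans (hAlip.dist_le_mul s hs_ball t ht)
  refine ⟨K.toNNReal, ε, hε, fun s t hs ht => ?_⟩
  simpa [dist_eq_norm, Real.dist_eq] using
    hlip.dist_le_mul s (mem_ball.mpr hs) t (mem_ball.mpr ht)
end

section
/- Extension lemma, continuous case: let I ⊆ ℝ be an interval, let n ≤ N, and let μ_1, …, μ_N : I → ℂ and λ_1, …, λ_n : I → ℂ be continuous functions such that for every t ∈ I and z ∈ ℂ the number of indices j ≤ n with λ_j(t) = z is at most the number of indices j ≤ N with μ_j(t) = z. Then there exist continuous functions λ_{n+1}, …, λ_N : I → ℂ such that for every t ∈ I and z ∈ ℂ the number of indices j ≤ N with λ_j(t) = z equals the number of indices j ≤ N with μ_j(t) = z. -/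
/-!
Think of `t ↦ {μ_j(t)}` as a continuous map into unordered tuples, continuity being measured by
the optimal matching distance. Removing the values of the `λ_j` keeps it continuous: near `t₀`,
the points of either multiset sit in small disjoint balls around the distinct points at `t₀`, with
the same multiplicities, and the multiplicities subtract. So it suffices to show that a continuous
multiset-valued map `F` of constant size `n` on an interval has a continuous enumeration.

This goes by strong induction on `n`. Near a point `s` where `F s` has two distinct points, `F t`
splits into the clusters around the distinct points of `F s`; each is a continuous multiset of size
`< n`, so the clusters, and therefore `F`, can be enumerated near `s`. Two enumerations can be
relabelled so that they agree at a point and then glued there; a supremum argument propagates local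
enumerations along compact intervals, and an exhaustion by compact intervals covers each connected
component of the set of such `s`. At the other points all values of `F` coincide, and every
enumeration of `F` is continuous there.
-/

open Set Filter Topology

namespace Multiset

variable {α β γ : Type*}

theorem Rel.filter {r : α → β → Prop} {A : Multiset α} {B : Multiset β} (h : Rel r A B)
    {p : α → Prop} {q : β → Prop} [DecidablePred p] [DecidablePred q]
    (hpq : ∀ a ∈ A, ∀ b ∈ B, r a b → (p a ↔ q b)) : Rel r (A.filter p) (B.filter q) := by
  induction h with
  | zero => simp
  | @cons a b A B hab _ ih =>
    have ih := ih fun a' ha' b' hb' => hpq a' (mem_cons_of_mem ha') b' (mem_cons_of_mem hb')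
    have hab' := hpq a (mem_cons_self a A) b (mem_cons_self b B) hab
    by_cases ha : p a
    · rw [filter_cons_of_pos _ ha, filter_cons_of_pos _ (hab'.1 ha)]
      exact ih.cons hab
    · rwa [filter_cons_of_neg _ ha, filter_cons_of_neg _ (mt hab'.2 ha)]

theorem rel_sum {r : α → β → Prop} {V : Finset γ} {f : γ → Multiset α} {g : γ → Multiset β}
    (h : ∀ v ∈ V, Rel r (f v) (g v)) : Rel r (∑ v ∈ V, f v) (∑ v ∈ V, g v) := by
  induction V using Finset.cons_induction with
  | empty => simp
  | cons v V hv ih =>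
    rw [Finset.sum_cons, Finset.sum_cons]
    exact (h v (Finset.mem_cons_self v V)).add (ih fun w hw => h w (Finset.mem_cons_of_mem hw))

theorem sum_filter_eq_self {A : Multiset α} {V : Finset β} (p : β → α → Prop)
    [∀ v, DecidablePred (p v)] (hex : ∀ a ∈ A, ∃ v ∈ V, p v a)
    (huniq : ∀ a ∈ A, ∀ v ∈ V, ∀ w ∈ V, p v a → p w a → v = w) :
    ∑ v ∈ V, A.filter (p v) = A := by
  classical
  ext a
  rw [count_sum']
  simp only [count_filter]
  by_cases ha : a ∈ A
  · obtain ⟨v, hv, hva⟩ := hex a ha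
    rw [Finset.sum_eq_single_of_mem v hv (fun w hw hwv => if_neg fun hwa =>
      hwv (huniq a ha w hw v hv hwa hva)), if_pos hva]
  · simp [count_eq_zero.2 ha]

theorem count_lt_card_of_ne [DecidableEq α] {A : Multiset α} {x y : α} (hx : x ∈ A) (hy : y ∈ A)
    (hxy : x ≠ y) (v : α) : count v A < card A :=
  (count_le_card v A).lt_of_ne fun h => hxy <| (count_eq_card.1 h x hx).symm.trans
    (count_eq_card.1 h y hy)

theorem natCard_subtype_eq_count_map {ι : Type*} [Fintype ι] [DecidableEq α] (f : ι → α)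
    (z : α) : Nat.card {i // f i = z} = count z (Finset.univ.val.map f) := by
  classical
  rw [count_map, Nat.card_eq_fintype_card, Fintype.card_subtype]
  simp only [eq_comm]
  rfl

end Multiset

theorem Finset.univ_val_map_eq_sum {ι α : Type*} [Fintype ι] (f : ι → α) :
    Finset.univ.val.map f = ∑ i, {f i} := by
  rw [← Multiset.sum_map_singleton (Finset.univ.val.map f), Multiset.map_map]
  rfl

theorem ContinuousOn.if_lt {Y : Type*} [TopologicalSpace Y] {S : Set ℝ} {c : ℝ} {f g : ℝ → Y}
    (hf : ContinuousOn f (S ∩ Iic c)) (hg : ContinuousOn g (S ∩ Ici c)) (hfg : f c = g c) :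
    ContinuousOn (fun t => if t < c then f t else g t) S := by
  have hlt : {t : ℝ | t < c} = Iio c := rfl
  have hge : {t : ℝ | ¬t < c} = Ici c := by ext; simp
  refine ContinuousOn.if ?_ ?_ ?_
  · rintro t ⟨-, ht⟩
    rw [hlt, frontier_Iio, mem_singleton_iff] at ht
    rwa [ht]
  · rwa [hlt, closure_Iio]
  · rwa [hge, closure_Ici]

theorem exists_monotone_Iic_mem_nhdsWithin {U : Set ℝ} {p : ℝ} (hp : p ∈ U) :
    ∃ b : ℕ → ℝ, Monotone b ∧ (∀ k, b k ∈ U ∧ p ≤ b k) ∧ ∀ t ∈ U, ∃ k, Iic (b k) ∈ 𝓝[U] t := by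
  by_cases hmax : ∃ M, IsGreatest U M
  · obtain ⟨M, hMU, hM⟩ := hmax
    exact ⟨fun _ => M, monotone_const, fun _ => ⟨hMU, hM hp⟩,
      fun t _ => ⟨0, mem_of_superset self_mem_nhdsWithin hM⟩⟩
  have hlt : ∀ t ∈ U, ∃ u ∈ U, t < u := by
    intro t ht
    by_contra! h
    exact hmax ⟨t, ht, h⟩
  have hc : ∀ q : ℚ, ∃ u ∈ U, p ≤ u ∧ ((∃ v ∈ U, (q : ℝ) < v) → (q : ℝ) < u) := by
    intro q
    by_cases hq : ∃ v ∈ U, (q : ℝ) < v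
    · obtain ⟨v, hv, hqv⟩ := hq
      refine ⟨max p v, ?_, le_max_left p v, fun _ => hqv.trans_le (le_max_right p v)⟩
      rcases le_total p v with hpv | hvp
      · rwa [max_eq_right hpv]
      · rwa [max_eq_left hvp]
    · exact ⟨p, hp, le_rfl, fun h => absurd h hq⟩
  choose c hcU hpc hqc using hc
  refine ⟨partialSups (c ∘ (Denumerable.eqv ℚ).symm), partialSups_monotone _, fun k => ?_,
    fun t ht => ?_⟩
  · obtain ⟨j, -, hj⟩ := exists_partialSups_eq (c ∘ (Denumerable.eqv ℚ).symm) k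
    rw [hj]
    exact ⟨hcU _, hpc _⟩
  · obtain ⟨u, hu, htu⟩ := hlt t ht
    obtain ⟨q, htq, hqu⟩ := exists_rat_btwn htu
    refine ⟨Denumerable.eqv ℚ q, mem_nhdsWithin_of_mem_nhds (Iic_mem_nhds ?_)⟩
    calc t < q := htq
      _ < c q := hqc q ⟨u, hu, hqu⟩
      _ = (c ∘ (Denumerable.eqv ℚ).symm) (Denumerable.eqv ℚ q) := by simp
      _ ≤ _ := le_partialSups _ _

theorem exists_Icc_exhaustion {U : Set ℝ} {p : ℝ} (hp : p ∈ U) :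
    ∃ a b : ℕ → ℝ, Antitone a ∧ Monotone b ∧ (∀ k, a k ∈ U ∧ b k ∈ U ∧ a k ≤ b k) ∧
      ∃ κ : ℝ → ℕ, ∀ t ∈ U, Icc (a (κ t)) (b (κ t)) ∈ 𝓝[U] t := by
  obtain ⟨b, hbm, hbU, hb⟩ := exists_monotone_Iic_mem_nhdsWithin hp
  obtain ⟨a, ham, haU, ha⟩ := exists_monotone_Iic_mem_nhdsWithin (U := -U) (p := -p) (by simpa)
  refine ⟨fun k => -a k, b, fun i j hij => neg_le_neg (ham hij), hbm,
    fun k => ⟨(haU k).1, (hbU k).1, by linarith [(haU k).2, (hbU k).2]⟩, ?_⟩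
  have hneg (t : ℝ) : Tendsto Neg.neg (𝓝[U] t) (𝓝[-U] (-t)) :=
    continuous_neg.continuousWithinAt.tendsto_nhdsWithin fun s hs => by simpa using hs
  have hab : ∀ t ∈ U, ∃ k, Icc (-a k) (b k) ∈ 𝓝[U] t := by
    intro t ht
    obtain ⟨k₁, hk₁⟩ := hb t ht
    obtain ⟨k₂, hk₂⟩ := ha (-t) (by simpa)
    refine ⟨max k₁ k₂, ?_⟩
    rw [← Ici_inter_Iic]
    refine inter_mem (mem_of_superset (hneg t hk₂) fun s hs => ?_)
      (mem_of_superset hk₁ (Iic_subset_Iic.2 (hbm (le_max_left _ _))))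
    simp only [mem_preimage, mem_Iic] at hs
    simp only [mem_Ici]
    linarith [ham (le_max_right k₁ k₂)]
  choose! κ hκ using hab
  exact ⟨κ, hκ⟩

section Metric

variable {E : Type*} [MetricSpace E]

theorem Set.Pairwise.eq_of_dist_lt {V : Set E} {δ : ℝ} (hV : V.Pairwise fun v w => δ ≤ dist v w)
    {v w : E} (hv : v ∈ V) (hw : w ∈ V) (h : dist v w < δ) : v = w := by
  by_contra hne
  exact (hV hv hw hne).not_gt h

theorem Finset.exists_pos_pairwise_le_dist (V : Finset E) :
    ∃ δ > 0, (V : Set E).Pairwise fun v w => δ ≤ dist v w := by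
  have hev : ∀ᶠ δ in 𝓝[>] (0 : ℝ), ∀ p ∈ V.offDiag, δ ≤ dist p.1 p.2 :=
    (eventually_all_finset _).2 fun p hp =>
      nhdsWithin_le_nhds (ge_mem_nhds (dist_pos.2 (Finset.mem_offDiag.1 hp).2.2))
  obtain ⟨δ, hδV, hδ⟩ := (hev.and self_mem_nhdsWithin).exists
  exact ⟨δ, hδ, fun v hv w hw hvw => hδV (v, w) (Finset.mem_offDiag.2 ⟨hv, hw, hvw⟩)⟩

namespace Multiset

variable {A B : Multiset E} {V : Finset E} {ε : ℝ}

theorem Rel.exists_ne (h : Rel (fun a b => dist a b < ε) A B) {x y : E} (hx : x ∈ B) (hy : y ∈ B)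
    (hxy : 2 * ε ≤ dist x y) : ∃ x' ∈ A, ∃ y' ∈ A, x' ≠ y' := by
  obtain ⟨x', hx', hxx'⟩ := exists_mem_of_rel_of_mem (rel_flip.2 h) hx
  obtain ⟨y', hy', hyy'⟩ := exists_mem_of_rel_of_mem (rel_flip.2 h) hy
  refine ⟨x', hx', y', hy', fun h => ?_⟩
  subst h
  linarith [dist_triangle_left x y x', show dist x' x < ε from hxx', show dist x' y < ε from hyy']

theorem sum_filter_dist_lt_eq_self [DecidableEq E]
    (hV : (V : Set E).Pairwise fun v w => 2 * ε ≤ dist v w)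
    (hAV : ∀ a ∈ A, ∃ v ∈ V, dist a v < ε) : ∑ v ∈ V, A.filter (dist · v < ε) = A :=
  sum_filter_eq_self (fun v a => dist a v < ε) hAV fun a _ v hv w hw hav haw =>
    hV.eq_of_dist_lt hv hw (by linarith [dist_triangle_left v w a])

variable [DecidableEq E]

theorem card_filter_dist_lt_eq_count (hV : (V : Set E).Pairwise fun v w => 2 * ε ≤ dist v w)
    (hBV : ∀ b ∈ B, b ∈ V) (hAB : Rel (fun a b => dist a b < ε) A B) {v : E} (hv : v ∈ V) :
    card (A.filter (dist · v < ε)) = count v B := by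
  rw [count_eq_card_filter_eq]
  refine card_eq_card_of_rel (hAB.filter fun a _ b hb hab => ⟨fun hav => ?_, ?_⟩)
  · exact hV.eq_of_dist_lt hv (hBV b hb) (by linarith [dist_triangle_left v b a])
  · rintro rfl
    exact hab

theorem rel_dist_lt_of_card_filter_eq_count
    (hV : (V : Set E).Pairwise fun v w => 2 * ε ≤ dist v w)
    (hAV : ∀ a ∈ A, ∃ v ∈ V, dist a v < ε) (hBV : ∀ b ∈ B, b ∈ V)
    (hcount : ∀ v ∈ V, card (A.filter (dist · v < ε)) = count v B) :
    Rel (fun a b => dist a b < ε) A B := by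
  rw [← sum_filter_dist_lt_eq_self hV hAV,
    ← sum_filter_eq_self (fun v b => b = v) (fun b hb => ⟨b, hBV b hb, rfl⟩)
      (by rintro b - v - w - rfl rfl; rfl)]
  refine rel_sum fun v hv => ?_
  rw [filter_eq', rel_replicate_right]
  exact ⟨hcount v hv, fun a ha => (mem_filter.1 ha).2⟩

end Multiset

variable {X : Type*} [TopologicalSpace X]

/-- Continuity for the bottleneck (optimal matching) distance between multisets. -/
def MatchingContinuousOn (F : X → Multiset E) (I : Set X) : Prop :=
  ∀ t₀ ∈ I, ∀ ε > 0, ∀ᶠ t in 𝓝[I] t₀, Multiset.Rel (fun a b => dist a b < ε) (F t) (F t₀)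

theorem matchingContinuousOn_map_univ {ι : Type*} [Fintype ι] {G : ι → X → E} {I : Set X}
    (hG : ∀ i, ContinuousOn (G i) I) :
    MatchingContinuousOn (fun t => Finset.univ.val.map (G · t)) I := by
  intro t₀ ht₀ ε hε
  filter_upwards [eventually_all.2 fun i => Metric.tendsto_nhds.1 (hG i t₀ ht₀) ε hε] with t ht
  rw [Multiset.rel_map]
  exact Multiset.rel_refl_of_refl_on fun i _ => ht i

namespace MatchingContinuousOn

variable {F : X → Multiset E} {I : Set X}

theorem mono (hF : MatchingContinuousOn F I) {J : Set X} (hJI : J ⊆ I) :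
    MatchingContinuousOn F J :=
  fun t₀ ht₀ ε hε => nhdsWithin_mono t₀ hJI (hF t₀ (hJI ht₀) ε hε)

theorem sub [DecidableEq E] {A B : X → Multiset E} (hA : MatchingContinuousOn A I)
    (hB : MatchingContinuousOn B I) (hBA : ∀ t ∈ I, B t ≤ A t) :
    MatchingContinuousOn (fun t => A t - B t) I := by
  intro t₀ ht₀ ε hε
  obtain ⟨δ, hδ, hV⟩ := (A t₀).toFinset.exists_pos_pairwise_le_dist
  have hε' : 0 < min ε (δ / 2) := by positivity
  have hV' : ((A t₀).toFinset : Set E).Pairwise fun v w => 2 * min ε (δ / 2) ≤ dist v w :=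
    hV.mono' fun v w h => by linarith [min_le_right ε (δ / 2)]
  filter_upwards [hA t₀ ht₀ _ hε', hB t₀ ht₀ _ hε', self_mem_nhdsWithin] with t hAt hBt ht
  have hB₀ : ∀ b ∈ B t₀, b ∈ (A t₀).toFinset := fun b hb =>
    Multiset.mem_toFinset.2 (Multiset.mem_of_le (hBA t₀ ht₀) hb)
  refine (Multiset.rel_dist_lt_of_card_filter_eq_count hV' (fun a ha => ?_)
    (fun b hb => Multiset.mem_toFinset.2 (Multiset.mem_of_le tsub_le_self hb)) fun v hv => ?_).mono
    fun a _ b _ h => h.trans_le (min_le_left _ _)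
  · obtain ⟨b, hb, hab⟩ :=
      Multiset.exists_mem_of_rel_of_mem hAt (Multiset.mem_of_le tsub_le_self ha)
    exact ⟨b, Multiset.mem_toFinset.2 hb, hab⟩
  · rw [Multiset.filter_sub, Multiset.card_sub (Multiset.filter_le_filter _ (hBA t ht)),
      Multiset.card_filter_dist_lt_eq_count hV' (fun a ha => Multiset.mem_toFinset.2 ha) hAt hv,
      Multiset.card_filter_dist_lt_eq_count hV' hB₀ hBt hv, Multiset.count_sub]

theorem filter_dist_lt (hF : MatchingContinuousOn F I) {V : Finset E} {ε : ℝ} (hε : 0 < ε)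
    (hV : (V : Set E).Pairwise fun v w => 3 * ε ≤ dist v w)
    (hFV : ∀ t ∈ I, ∀ z ∈ F t, ∃ v ∈ V, dist z v < ε) {v : E} (hv : v ∈ V) :
    MatchingContinuousOn (fun t => (F t).filter (dist · v < ε)) I := by
  intro t₀ ht₀ η hη
  filter_upwards [hF t₀ ht₀ _ (lt_min hη hε), self_mem_nhdsWithin] with t hrel ht
  refine (hrel.filter fun a ha b hb hab => ?_).mono fun _ _ _ _ h => h.trans_le (min_le_left _ _)
  obtain ⟨va, hva, hava⟩ := hFV t ht a ha
  obtain ⟨vb, hvb, hbvb⟩ := hFV t₀ ht₀ b hb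
  have hab' : dist a b < ε := hab.trans_le (min_le_right _ _)
  have hvab : va = vb := hV.eq_of_dist_lt hva hvb (by
    linarith [dist_triangle4 va a b vb, dist_comm va a])
  constructor
  · intro hav
    rwa [hV.eq_of_dist_lt hv hva (by linarith [dist_triangle_left v va a]), hvab]
  · intro hbv
    rwa [hV.eq_of_dist_lt hv hvb (by linarith [dist_triangle_left v vb b]), ← hvab]

theorem continuousWithinAt (hF : MatchingContinuousOn F I) {g : X → E} {t₀ : X} (ht₀ : t₀ ∈ I)
    (hg : ∀ t ∈ I, g t ∈ F t) (hdeg : ∀ x ∈ F t₀, x = g t₀) : ContinuousWithinAt g I t₀ := by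
  refine Metric.tendsto_nhds.2 fun ε hε => ?_
  filter_upwards [hF t₀ ht₀ ε hε, self_mem_nhdsWithin] with t hrel ht
  obtain ⟨b, hb, hgb⟩ := Multiset.exists_mem_of_rel_of_mem hrel (hg t ht)
  rwa [← hdeg b hb]

end MatchingContinuousOn

structure IsLiftOn {ι : Type*} [Fintype ι] (F : X → Multiset E) (G : ι → X → E) (S : Set X) :
    Prop where
  continuousOn : ∀ i, ContinuousOn (G i) S
  eq_map : ∀ t ∈ S, F t = Finset.univ.val.map (G · t)

namespace IsLiftOn

variable {ι κ : Type*} [Fintype ι] [Fintype κ] {F : X → Multiset E} {G : ι → X → E} {S T : Set X}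

theorem mono (h : IsLiftOn F G S) (hTS : T ⊆ S) : IsLiftOn F G T :=
  ⟨fun i => (h.continuousOn i).mono hTS, fun t ht => h.eq_map t (hTS ht)⟩

theorem comp_equiv (h : IsLiftOn F G S) (e : κ ≃ ι) : IsLiftOn F (G ∘ e) S := by
  refine ⟨fun k => h.continuousOn (e k), fun t ht => ?_⟩
  rw [h.eq_map t ht, ← Multiset.map_univ_val_equiv e, Multiset.map_map]
  rfl

theorem exists_perm_eq (h : IsLiftOn F G S) {c : X} (hc : c ∈ S) {v : ι → E}
    (hv : F c = Finset.univ.val.map v) : ∃ e : ι ≃ ι, ∀ i, G (e i) c = v i := by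
  classical
  have hfiber (z : E) : Nonempty ({i // v i = z} ≃ {i // G i c = z}) := by
    rw [← Finite.card_eq, Multiset.natCard_subtype_eq_count_map,
      Multiset.natCard_subtype_eq_count_map, ← hv, ← h.eq_map c hc]
  exact ⟨Equiv.ofFiberEquiv fun z => (hfiber z).some, Equiv.ofFiberEquiv_map (g := (G · c)) _⟩

theorem sigma {V : Type*} [Fintype V] {ιs : V → Type*} [∀ v, Fintype (ιs v)]
    {C : V → X → Multiset E} {H : ∀ v, ιs v → X → E} (h : ∀ v, IsLiftOn (C v) (H v) S)
    (hF : ∀ t ∈ S, F t = ∑ v, C v t) : IsLiftOn F (fun i : Σ v, ιs v => H i.1 i.2) S := by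
  refine ⟨fun i => (h i.1).continuousOn i.2, fun t ht => ?_⟩
  simp only [hF t ht, (h _).eq_map t ht, Finset.univ_val_map_eq_sum, Fintype.sum_sigma]

theorem sumElim {F' : X → Multiset E} {G' : κ → X → E} (h : IsLiftOn F G S)
    (h' : IsLiftOn F' G' S) : IsLiftOn (F + F') (Sum.elim G G') S := by
  refine ⟨fun i => ?_, fun t ht => ?_⟩
  · cases i with
    | inl i => exact h.continuousOn i
    | inr i => exact h'.continuousOn i
  · simp only [Pi.add_apply, h.eq_map t ht, h'.eq_map t ht, Finset.univ_val_map_eq_sum,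
      Fintype.sum_sum_type, Sum.elim_inl, Sum.elim_inr]

theorem exists_extend_of_subsingleton [Nonempty E] {I D : Set X} (hG : IsLiftOn F G D)
    (hF : MatchingContinuousOn F I) (hD : ∀ t ∈ D, D ∈ 𝓝[I] t)
    (hcard : ∀ t ∈ I, Multiset.card (F t) = Fintype.card ι)
    (hdeg : ∀ t ∈ I, t ∉ D → ∀ x ∈ F t, ∀ y ∈ F t, x = y) :
    ∃ G' : ι → X → E, IsLiftOn F G' I := by
  classical
  set G' : ι → X → E := fun i t => if t ∈ D then G i t else Classical.epsilon (· ∈ F t)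
  have heq : ∀ t ∈ I, F t = Finset.univ.val.map (G' · t) := by
    intro t ht
    by_cases htD : t ∈ D
    · simpa only [G', if_pos htD] using hG.eq_map t htD
    · simp only [G', if_neg htD, Multiset.map_const', Finset.card_val, Finset.card_univ,
        ← hcard t ht]
      exact Multiset.eq_replicate_of_mem fun y hy =>
        hdeg t ht htD y hy _ (Classical.epsilon_spec ⟨y, hy⟩)
  have hmem : ∀ i, ∀ t ∈ I, G' i t ∈ F t := fun i t ht => by
    rw [heq t ht]
    exact Multiset.mem_map_of_mem _ (Finset.mem_univ_val i)
  refine ⟨G', fun i t ht => ?_, heq⟩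
  by_cases htD : t ∈ D
  · refine ((hG.continuousOn i t htD).mono_of_mem_nhdsWithin (hD t htD)).congr_of_eventuallyEq ?_
      (if_pos htD)
    filter_upwards [hD t htD] with s hs
    exact if_pos hs
  · exact hF.continuousWithinAt ht (hmem i) fun x hx => hdeg t ht htD x hx _ (hmem i t ht)

end IsLiftOn

namespace IsLiftOn

variable {ι : Type*} [Fintype ι] {F : ℝ → Multiset E} {S : Set ℝ} {c : ℝ} {G₁ G₂ : ι → ℝ → E}

theorem if_lt (h₁ : IsLiftOn F G₁ (S ∩ Iic c)) (h₂ : IsLiftOn F G₂ (S ∩ Ici c))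
    (hc : ∀ i, G₁ i c = G₂ i c) : IsLiftOn F (fun i t => if t < c then G₁ i t else G₂ i t) S := by
  refine ⟨fun i => (h₁.continuousOn i).if_lt (h₂.continuousOn i) (hc i), fun t ht => ?_⟩
  rcases lt_or_ge t c with htc | htc
  · simpa only [htc, if_true] using h₁.eq_map t ⟨ht, htc.le⟩
  · simpa only [htc.not_gt, if_false] using h₂.eq_map t ⟨ht, htc⟩

theorem exists_extend_right (hcS : c ∈ S) (h₁ : IsLiftOn F G₁ (S ∩ Iic c))
    (h₂ : IsLiftOn F G₂ (S ∩ Ici c)) : ∃ G, IsLiftOn F G S ∧ ∀ i, EqOn (G i) (G₁ i) (Iic c) := by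
  obtain ⟨e, he⟩ := h₂.exists_perm_eq ⟨hcS, mem_Ici.2 le_rfl⟩ (h₁.eq_map c ⟨hcS, mem_Iic.2 le_rfl⟩)
  refine ⟨_, h₁.if_lt (h₂.comp_equiv e) fun i => (he i).symm, fun i t ht => ?_⟩
  rcases (mem_Iic.1 ht).lt_or_eq with htc | rfl
  · exact if_pos htc
  · exact (if_neg (lt_irrefl t)).trans (he i)

theorem exists_extend_left (hcS : c ∈ S) (h₁ : IsLiftOn F G₁ (S ∩ Iic c))
    (h₂ : IsLiftOn F G₂ (S ∩ Ici c)) : ∃ G, IsLiftOn F G S ∧ ∀ i, EqOn (G i) (G₂ i) (Ici c) := by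
  obtain ⟨e, he⟩ := h₁.exists_perm_eq ⟨hcS, mem_Iic.2 le_rfl⟩ (h₂.eq_map c ⟨hcS, mem_Ici.2 le_rfl⟩)
  exact ⟨_, (h₁.comp_equiv e).if_lt h₂ he, fun i t ht => if_neg (not_lt.2 ht)⟩

end IsLiftOn

/-- The neighbourhoods are intervals inside `D`, so that each lies in one connected component
of `D`. -/
def HasLocalLiftsOn (F : ℝ → Multiset E) (ι : Type*) [Fintype ι] (D : Set ℝ) : Prop :=
  ∀ s ∈ D, ∃ W ∈ 𝓝[D] s, W ⊆ D ∧ W.OrdConnected ∧ ∃ G : ι → ℝ → E, IsLiftOn F G W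

namespace HasLocalLiftsOn

variable {ι : Type*} [Fintype ι] {F : ℝ → Multiset E} {U D : Set ℝ}

theorem exists_isLiftOn_inter_Icc (h : HasLocalLiftsOn F ι U) (hU : U.OrdConnected) {a b : ℝ}
    (ha : a ∈ U) (hb : b ∈ U) (hab : a ≤ b) : ∃ G : ι → ℝ → E, IsLiftOn F G (U ∩ Icc a b) := by
  set P := {c ∈ Icc a b | ∃ G : ι → ℝ → E, IsLiftOn F G (U ∩ Icc a c)}
  have haP : a ∈ P := by
    obtain ⟨W, hW, -, -, G, hG⟩ := h a ha
    refine ⟨⟨le_rfl, hab⟩, G, hG.mono ?_⟩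
    rintro t ⟨-, hat, hta⟩
    rw [le_antisymm hta hat]
    exact mem_of_mem_nhdsWithin ha hW
  have hbdd : BddAbove P := ⟨b, fun c hc => hc.1.2⟩
  have has : a ≤ sSup P := le_csSup hbdd haP
  have hsU : sSup P ∈ U := hU.out ha hb ⟨has, csSup_le ⟨a, haP⟩ fun c hc => hc.1.2⟩
  obtain ⟨W, hW, -, -, Gs, hGs⟩ := h _ hsU
  obtain ⟨δ, hδ, hδW⟩ := Metric.mem_nhdsWithin_iff.1 hW
  obtain ⟨c, hcP, hsc⟩ := exists_lt_of_lt_csSup ⟨a, haP⟩ (sub_lt_self (sSup P) hδ)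
  have hcs : c ≤ sSup P := le_csSup hbdd hcP
  obtain ⟨⟨hac, hcb⟩, G, hG⟩ := hcP
  set d := min b (sSup P + δ / 2)
  have hcd : c ≤ d := le_min hcb (by linarith)
  have hWd : U ∩ Icc a d ∩ Ici c ⊆ W := fun t ⟨⟨htU, _, htd⟩, hct⟩ => hδW ⟨by
    rw [Real.ball_eq_Ioo]
    constructor <;> linarith [min_le_right b (sSup P + δ / 2), mem_Ici.1 hct], htU⟩
  obtain ⟨G', hG', -⟩ := IsLiftOn.exists_extend_right (S := U ∩ Icc a d)
    ⟨hU.out ha hsU ⟨hac, hcs⟩, hac, hcd⟩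
    (hG.mono fun t ⟨⟨htU, hat, _⟩, htc⟩ => ⟨htU, hat, htc⟩) (hGs.mono hWd)
  have hdP : d ∈ P := ⟨⟨hac.trans hcd, min_le_left _ _⟩, G', hG'⟩
  rcases min_cases b (sSup P + δ / 2) with ⟨hd, -⟩ | ⟨hd, -⟩
  · exact hd ▸ hdP.2
  · linarith [le_csSup hbdd hdP]

theorem exists_extend_Icc (h : HasLocalLiftsOn F ι U) (hU : U.OrdConnected) {a b a' b' : ℝ}
    (ha' : a' ∈ U) (hb' : b' ∈ U) (ha : a ∈ U) (hb : b ∈ U) (ha'a : a' ≤ a) (hab : a ≤ b)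
    (hbb' : b ≤ b') {G : ι → ℝ → E} (hG : IsLiftOn F G (U ∩ Icc a b)) :
    ∃ G', IsLiftOn F G' (U ∩ Icc a' b') ∧ ∀ i, EqOn (G' i) (G i) (U ∩ Icc a b) := by
  obtain ⟨R, hR⟩ := h.exists_isLiftOn_inter_Icc hU hb hb' hbb'
  obtain ⟨Z, hZ, hZX⟩ := IsLiftOn.exists_extend_right (S := U ∩ Icc a b') ⟨hb, hab, hbb'⟩
    (hG.mono fun t ⟨⟨htU, hat, _⟩, htb⟩ => ⟨htU, hat, htb⟩)
    (hR.mono fun t ⟨⟨htU, _, htb'⟩, hbt⟩ => ⟨htU, hbt, htb'⟩)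
  obtain ⟨L, hL⟩ := h.exists_isLiftOn_inter_Icc hU ha' ha ha'a
  obtain ⟨G', hG', hG'Z⟩ := IsLiftOn.exists_extend_left (S := U ∩ Icc a' b')
    ⟨ha, ha'a, hab.trans hbb'⟩
    (hL.mono fun t ⟨⟨htU, ha't, _⟩, hta⟩ => ⟨htU, ha't, hta⟩)
    (hZ.mono fun t ⟨⟨htU, _, htb'⟩, hat⟩ => ⟨htU, hat, htb'⟩)
  exact ⟨G', hG', fun i t ht => (hG'Z i ht.2.1).trans (hZX i ht.2.2)⟩

theorem exists_seq_isLiftOn (h : HasLocalLiftsOn F ι U) (hU : U.OrdConnected) {a b : ℕ → ℝ}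
    (ha : Antitone a) (hb : Monotone b) (habU : ∀ k, a k ∈ U ∧ b k ∈ U ∧ a k ≤ b k) :
    ∃ T : ℕ → ι → ℝ → E, (∀ k, IsLiftOn F (T k) (U ∩ Icc (a k) (b k))) ∧
      ∀ k m i t, t ∈ U ∩ Icc (a k) (b k) → t ∈ U ∩ Icc (a m) (b m) → T k i t = T m i t := by
  set K : ℕ → Set ℝ := fun k => U ∩ Icc (a k) (b k)
  have hstep : ∀ k (G : ι → ℝ → E), ∃ G' : ι → ℝ → E,
      IsLiftOn F G (K k) → IsLiftOn F G' (K (k + 1)) ∧ ∀ i, EqOn (G' i) (G i) (K k) := by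
    intro k G
    by_cases hG : IsLiftOn F G (K k)
    · obtain ⟨G', hG'⟩ := h.exists_extend_Icc hU (habU (k + 1)).1 (habU (k + 1)).2.1 (habU k).1
        (habU k).2.1 (ha k.le_succ) (habU k).2.2 (hb k.le_succ) hG
      exact ⟨G', fun _ => hG'⟩
    · exact ⟨G, fun hG' => absurd hG' hG⟩
  choose step hstep using hstep
  obtain ⟨G₀, hG₀⟩ := h.exists_isLiftOn_inter_Icc hU (habU 0).1 (habU 0).2.1 (habU 0).2.2
  let T : ℕ → ι → ℝ → E := fun k => Nat.rec G₀ step k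
  have hT : ∀ k, IsLiftOn F (T k) (K k) := fun k => by
    induction k with
    | zero => exact hG₀
    | succ k ih => exact (hstep k (T k) ih).1
  have hTmono : ∀ k m, k ≤ m → ∀ i, EqOn (T m i) (T k i) (K k) := by
    intro k m hkm i
    induction m, hkm using Nat.le_induction with
    | base => exact fun _ _ => rfl
    | succ m hkm ih =>
      exact fun t ht => ((hstep m (T m) (hT m)).2 i
        ⟨ht.1, (ha hkm).trans ht.2.1, ht.2.2.trans (hb hkm)⟩).trans (ih ht)
  refine ⟨T, hT, fun k m i t hk hm => ?_⟩
  rcases le_total k m with hkm | hmk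
  · exact (hTmono k m hkm i hk).symm
  · exact hTmono m k hmk i hm

theorem exists_isLiftOn_of_ordConnected (h : HasLocalLiftsOn F ι U) (hU : U.OrdConnected)
    (hne : U.Nonempty) : ∃ G : ι → ℝ → E, IsLiftOn F G U := by
  obtain ⟨p, hp⟩ := hne
  obtain ⟨a, b, ha, hb, habU, κ, hκ⟩ := exists_Icc_exhaustion hp
  obtain ⟨T, hT, hTT⟩ := h.exists_seq_isLiftOn hU ha hb habU
  have hmem : ∀ t ∈ U, t ∈ U ∩ Icc (a (κ t)) (b (κ t)) :=
    fun t ht => ⟨ht, mem_of_mem_nhdsWithin ht (hκ t ht)⟩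
  refine ⟨fun i t => T (κ t) i t, fun i t ht => ?_, fun t ht => (hT (κ t)).eq_map t (hmem t ht)⟩
  have hK : U ∩ Icc (a (κ t)) (b (κ t)) ∈ 𝓝[U] t := inter_mem self_mem_nhdsWithin (hκ t ht)
  refine (((hT (κ t)).continuousOn i t (hmem t ht)).mono_of_mem_nhdsWithin hK).congr_of_eventuallyEq
    ?_ rfl
  filter_upwards [hK] with s hs
  exact hTT _ _ i s (hmem s hs.1) hs

theorem restrict_connectedComponentIn (h : HasLocalLiftsOn F ι D) (t₀ : ℝ) :
    HasLocalLiftsOn F ι (connectedComponentIn D t₀) := by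
  intro s hs
  have hsD : s ∈ D := connectedComponentIn_subset D t₀ hs
  obtain ⟨W, hW, hWD, hWc, hWG⟩ := h s hsD
  refine ⟨W, nhdsWithin_mono s (connectedComponentIn_subset D t₀) hW, ?_, hWc, hWG⟩
  rw [connectedComponentIn_eq hs]
  exact hWc.isPreconnected.subset_connectedComponentIn (mem_of_mem_nhdsWithin hsD hW) hWD

theorem exists_isLiftOn [Nonempty E] (h : HasLocalLiftsOn F ι D) :
    ∃ G : ι → ℝ → E, IsLiftOn F G D := by
  have hC : ∀ C : Set ℝ, ∃ G : ι → ℝ → E,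
      (∃ t ∈ D, C = connectedComponentIn D t) → IsLiftOn F G C := by
    rintro C
    by_cases hCD : ∃ t ∈ D, C = connectedComponentIn D t
    · obtain ⟨t, ht, rfl⟩ := hCD
      obtain ⟨G, hG⟩ := (h.restrict_connectedComponentIn t).exists_isLiftOn_of_ordConnected
        isPreconnected_connectedComponentIn.ordConnected ⟨t, mem_connectedComponentIn ht⟩
      exact ⟨G, fun _ => hG⟩
    · exact ⟨fun _ _ => Classical.arbitrary E, fun hC => absurd hC hCD⟩
  choose ψ hψ using hC
  have hψD (t : ℝ) (ht : t ∈ D) := hψ _ ⟨t, ht, rfl⟩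
  refine ⟨fun i t => ψ (connectedComponentIn D t) i t, fun i t ht => ?_,
    fun t ht => (hψD t ht).eq_map t (mem_connectedComponentIn ht)⟩
  obtain ⟨W, hW, hWD, hWc, -⟩ := h t ht
  have hWC : W ⊆ connectedComponentIn D t :=
    hWc.isPreconnected.subset_connectedComponentIn (mem_of_mem_nhdsWithin ht hW) hWD
  refine (((hψD t ht).continuousOn i t (mem_connectedComponentIn ht)).mono_of_mem_nhdsWithin
    (mem_of_superset hW hWC)).congr_of_eventuallyEq ?_ rfl
  filter_upwards [hW] with s hs
  rw [connectedComponentIn_eq (hWC hs)]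

end HasLocalLiftsOn

theorem exists_nhdsWithin_isLiftOn_of_ne {n : ℕ}
    (ih : ∀ m < n, ∀ {W : Set ℝ}, W.OrdConnected → ∀ {C : ℝ → Multiset E},
      MatchingContinuousOn C W → (∀ t ∈ W, Multiset.card (C t) = m) →
      ∃ G : Fin m → ℝ → E, IsLiftOn C G W)
    {I : Set ℝ} (hI : I.OrdConnected) {F : ℝ → Multiset E} (hF : MatchingContinuousOn F I)
    (hcard : ∀ t ∈ I, Multiset.card (F t) = n) {s : ℝ} (hs : s ∈ I) {x y : E} (hx : x ∈ F s)
    (hy : y ∈ F s) (hxy : x ≠ y) :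
    ∃ W ∈ 𝓝[I] s, W ⊆ I ∧ W.OrdConnected ∧ (∀ t ∈ W, ∃ x ∈ F t, ∃ y ∈ F t, x ≠ y) ∧
      ∃ G : Fin n → ℝ → E, IsLiftOn F G W := by
  classical
  obtain ⟨δ, hδ, hV⟩ := (F s).toFinset.exists_pos_pairwise_le_dist
  set V := (F s).toFinset
  have hε : 0 < δ / 3 := by positivity
  have hV3 : (V : Set E).Pairwise fun v w => 3 * (δ / 3) ≤ dist v w := by
    rwa [mul_div_cancel₀ δ three_ne_zero]
  have hV2 : (V : Set E).Pairwise fun v w => 2 * (δ / 3) ≤ dist v w :=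
    hV3.mono' fun v w h => by linarith
  have hsV : ∀ b ∈ F s, b ∈ V := fun b hb => Multiset.mem_toFinset.2 hb
  obtain ⟨r, hr, hrel⟩ := Metric.mem_nhdsWithin_iff.1 (hF s hs _ hε)
  set W := I ∩ Ioo (s - r) (s + r)
  have hWc : W.OrdConnected := hI.inter ordConnected_Ioo
  have hWrel : ∀ t ∈ W, Multiset.Rel (fun a b => dist a b < δ / 3) (F t) (F s) :=
    fun t ht => hrel ⟨by rw [Real.ball_eq_Ioo]; exact ht.2, ht.1⟩
  have hnear : ∀ t ∈ W, ∀ z ∈ F t, ∃ v ∈ V, dist z v < δ / 3 := fun t ht z hz => by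
    obtain ⟨b, hb, hzb⟩ := Multiset.exists_mem_of_rel_of_mem (hWrel t ht) hz
    exact ⟨b, hsV b hb, hzb⟩
  -- near `s`, `F t` is the sum of its clusters around the points of `V`, each of size `< n`
  have hlift (v : V) : ∃ G : Fin (Multiset.count v.1 (F s)) → ℝ → E,
      IsLiftOn (fun t => (F t).filter (dist · v.1 < δ / 3)) G W :=
    ih _ ((Multiset.count_lt_card_of_ne hx hy hxy v).trans_eq (hcard s hs)) hWc
      ((hF.mono inter_subset_left).filter_dist_lt hε hV3 hnear v.2)
      fun t ht => Multiset.card_filter_dist_lt_eq_count hV2 hsV (hWrel t ht) v.2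
  choose H hH using hlift
  have hsum : ∀ t ∈ W, F t = ∑ v : V, (F t).filter (dist · v.1 < δ / 3) := fun t ht =>
    (Multiset.sum_filter_dist_lt_eq_self hV2 (hnear t ht)).symm.trans
      (Finset.sum_coe_sort V _).symm
  have hsigma : Fintype.card (Σ v : V, Fin (Multiset.count v.1 (F s))) = n := by
    rw [Fintype.card_sigma, ← hcard s hs, ← Multiset.sum_count_eq_card hsV]
    simp only [Fintype.card_fin]
    exact Finset.sum_coe_sort V (Multiset.count · (F s))
  exact ⟨W, inter_mem_nhdsWithin _ (Ioo_mem_nhds (sub_lt_self s hr) (lt_add_of_pos_right s hr)),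
    inter_subset_left, hWc,
    fun t ht => (hWrel t ht).exists_ne hx hy (hV2 (hsV x hx) (hsV y hy) hxy),
    _, (IsLiftOn.sigma hH hsum).comp_equiv (Fintype.equivFinOfCardEq hsigma).symm⟩

theorem exists_isLiftOn_fin [Nonempty E] (n : ℕ) {I : Set ℝ} (hI : I.OrdConnected)
    {F : ℝ → Multiset E} (hF : MatchingContinuousOn F I)
    (hcard : ∀ t ∈ I, Multiset.card (F t) = n) : ∃ G : Fin n → ℝ → E, IsLiftOn F G I := by
  induction n using Nat.strong_induction_on generalizing I F with
  | _ n ih =>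
  set D := {t ∈ I | ∃ x ∈ F t, ∃ y ∈ F t, x ≠ y}
  have hloc : ∀ s ∈ D, ∃ W ∈ 𝓝[I] s, W ⊆ D ∧ W.OrdConnected ∧
      ∃ G : Fin n → ℝ → E, IsLiftOn F G W := by
    rintro s ⟨hs, x, hx, y, hy, hxy⟩
    obtain ⟨W, hW, hWI, hWc, hWD, hG⟩ :=
      exists_nhdsWithin_isLiftOn_of_ne ih hI hF hcard hs hx hy hxy
    exact ⟨W, hW, fun t ht => ⟨hWI ht, hWD t ht⟩, hWc, hG⟩
  obtain ⟨G, hG⟩ := HasLocalLiftsOn.exists_isLiftOn fun s hs =>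
    (hloc s hs).imp fun W ⟨hW, hW'⟩ => ⟨nhdsWithin_mono s (sep_subset I _) hW, hW'⟩
  refine hG.exists_extend_of_subsingleton hF
    (fun s hs => (hloc s hs).elim fun W ⟨hW, hWD, _⟩ => mem_of_superset hW hWD)
    (by simpa using hcard) fun t ht htD x hx y hy => ?_
  by_contra hxy
  exact htD ⟨ht, x, hx, y, hy, hxy⟩

end Metric

/-- Extension lemma, continuous case: let `I ⊆ ℝ` be an interval, `n ≤ N`, and let
`μ_1, …, μ_N` and `λ_1, …, λ_n` be continuous complex-valued functions on `I` such that at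
every `t ∈ I` every value is attained by the `λ`'s at most as often as by the `μ`'s. Then the
`λ`'s can be completed by continuous functions `λ_{n+1}, …, λ_N` so that at every `t ∈ I`
every value is attained by the `λ`'s exactly as often as by the `μ`'s. -/
theorem extension_lemma_continuous (N n : ℕ) (hn : n ≤ N)
    (I : Set ℝ) (hI : I.OrdConnected)
    (μ : Fin N → ℝ → ℂ) (l : Fin n → ℝ → ℂ)
    (hμ : ∀ j, ContinuousOn (μ j) I) (hl : ∀ j, ContinuousOn (l j) I)
    (hcard : ∀ t ∈ I, ∀ z : ℂ,
      Nat.card {j : Fin n // l j t = z} ≤ Nat.card {j : Fin N // μ j t = z}) :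
    ∃ L : Fin N → ℝ → ℂ,
      (∀ j, ContinuousOn (L j) I) ∧
      (∀ j : Fin n, ∀ t ∈ I, L (Fin.castLE hn j) t = l j t) ∧
      (∀ t ∈ I, ∀ z : ℂ,
        Nat.card {j : Fin N // L j t = z} = Nat.card {j : Fin N // μ j t = z}) := by
  classical
  set Mμ : ℝ → Multiset ℂ := fun t => Finset.univ.val.map (μ · t)
  set Ml : ℝ → Multiset ℂ := fun t => Finset.univ.val.map (l · t)
  have hle : ∀ t ∈ I, Ml t ≤ Mμ t := fun t ht => Multiset.le_iff_count.2 fun z => by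
    simpa only [Multiset.natCard_subtype_eq_count_map] using hcard t ht z
  obtain ⟨G, hG⟩ := exists_isLiftOn_fin (N - n) hI
    ((matchingContinuousOn_map_univ hμ).sub (matchingContinuousOn_map_univ hl) hle)
    fun t ht => by rw [Multiset.card_sub (hle t ht)]; simp [Mμ, Ml]
  set e : Fin n ⊕ Fin (N - n) ≃ Fin N := finSumFinEquiv.trans (finCongr (Nat.add_sub_cancel' hn))
  have hL := ((IsLiftOn.mk hl fun _ _ => rfl : IsLiftOn Ml l I).sumElim hG).comp_equiv e.symm
  refine ⟨_, hL.continuousOn, fun j t _ => ?_, fun t ht z => ?_⟩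
  · have : e.symm (Fin.castLE hn j) = Sum.inl j := e.symm_apply_eq.2 (Fin.ext rfl)
    simp [this]
  · rw [Multiset.natCard_subtype_eq_count_map, Multiset.natCard_subtype_eq_count_map,
      ← hL.eq_map t ht, Pi.add_apply, add_tsub_cancel_of_le (hle t ht)]
end

section
/- Weyl-type Lipschitz bound for ordered eigenvalues of Hermitian matrices: for a Hermitian n×n complex matrix A, let λ₁^↑(A) ≤ λ₂^↑(A) ≤ … ≤ λ_n^↑(A) denote its (real) eigenvalues repeated according to multiplicity and arranged increasingly. Then for all Hermitian n×n complex matrices A and B, max_{1 ≤ j ≤ n} |λ_j^↑(A) − λ_j^↑(B)| ≤ ‖A − B‖, where ‖·‖ is the operator norm. In other words, the map λ^↑ from the real vector space of Hermitian n×n matrices to ℝ^n (with the sup norm) is globally Lipschitz with Lipschitz constant 1. -/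
/-!
Weyl's inequality via Courant–Fischer: for self-adjoint `T`, `T'` with eigenvalues sorted
decreasingly, the span of the eigenvectors of `T` for its `i + 1` largest eigenvalues and the span
of the eigenvectors of `T'` for its `n - i` smallest ones meet in some `x ≠ 0`, by counting
dimensions. There `λᵢ(T) ‖x‖² ≤ re ⟪T x, x⟫` and `re ⟪T' x, x⟫ ≤ λᵢ(T') ‖x‖²`, so
`(λᵢ(T) - λᵢ(T')) ‖x‖² ≤ re ⟪(T - T') x, x⟫ ≤ ‖T - T'‖ ‖x‖²`.
Mathlib sorts eigenvalues decreasingly, so the increasing enumeration of the statement is its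
eigenvalue tuple composed with `Fin.rev`.
-/

open Matrix

open Module Submodule RCLike

theorem Antitone.eq_comp_rev_of_map_univ_eq {α : Type*} [PartialOrder α] {n : ℕ}
    {f g : Fin n → α} (hf : Antitone f) (hg : Monotone g)
    (h : Finset.univ.val.map f = Finset.univ.val.map g) : f = g ∘ Fin.rev := by
  have hperm : (List.ofFn f).Perm (List.ofFn (g ∘ Fin.revPerm)) := by
    rw [← Multiset.coe_eq_coe, ← Fin.univ_val_map, h, Fin.univ_val_map]
    exact Multiset.coe_eq_coe.2 (Fin.revPerm.ofFn_comp_perm g).symm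
  exact List.ofFn_injective <| hperm.eq_of_sortedGE hf.sortedGE_ofFn
    (hg.comp_antitone fun _ _ => Fin.rev_le_rev.mpr).sortedGE_ofFn

theorem Submodule.inf_ne_bot_of_finrank_lt_add {K V : Type*} [DivisionRing K] [AddCommGroup V]
    [Module K V] [FiniteDimensional K V] {U W : Submodule K V}
    (h : finrank K V < finrank K U + finrank K W) : U ⊓ W ≠ ⊥ := by
  intro hbot
  have hsum := finrank_sup_add_finrank_inf_eq U W
  rw [hbot, finrank_bot] at hsum
  have := (U ⊔ W).finrank_le
  omega

section OrthonormalBasis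

variable {ι 𝕜 E : Type*} [Fintype ι] [RCLike 𝕜] [NormedAddCommGroup E] [InnerProductSpace 𝕜 E]

theorem OrthonormalBasis.repr_eq_zero_of_mem_span_image (b : OrthonormalBasis ι 𝕜 E)
    {s : Set ι} {i : ι} (hi : i ∉ s) {x : E} (hx : x ∈ span 𝕜 (b '' s)) : b.repr x i = 0 := by
  rw [b.repr_apply_apply, ← mem_orthogonal_singleton_iff_inner_right]
  refine span_le.2 ?_ hx
  rintro _ ⟨k, hk, rfl⟩
  exact mem_orthogonal_singleton_iff_inner_right.2
    (b.orthonormal.inner_eq_zero fun hik => hi (hik ▸ hk))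

theorem OrthonormalBasis.finrank_span_image (b : OrthonormalBasis ι 𝕜 E) (s : Finset ι) :
    finrank 𝕜 (span 𝕜 (b '' s)) = s.card := by
  classical
  rw [finrank_span_set_eq_card ((b.orthonormal.linearIndependent.linearIndepOn _).id_image),
    Set.toFinset_image, Finset.toFinset_coe,
    Finset.card_image_of_injective _ b.orthonormal.linearIndependent.injective]

end OrthonormalBasis

namespace LinearMap.IsSymmetric

variable {𝕜 E : Type*} [RCLike 𝕜] [NormedAddCommGroup E] [InnerProductSpace 𝕜 E]
  [FiniteDimensional 𝕜 E] {T : E →ₗ[𝕜] E} {n : ℕ}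

local notation "⟪" x ", " y "⟫" => inner 𝕜 x y

theorem re_inner_apply_self_eq_sum (hT : T.IsSymmetric) (hn : finrank 𝕜 E = n) (x : E) :
    re ⟪T x, x⟫ = ∑ i, hT.eigenvalues hn i * ‖(hT.eigenvectorBasis hn).repr x i‖ ^ 2 := by
  rw [← (hT.eigenvectorBasis hn).repr.inner_map_map, PiLp.inner_apply, map_sum]
  refine Finset.sum_congr rfl fun i _ => ?_
  rw [hT.eigenvectorBasis_apply_self_apply, inner_apply, map_mul (starRingEnd 𝕜), conj_ofReal,
    mul_left_comm, mul_conj, ← ofReal_pow, ← ofReal_mul, ofReal_re]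

theorem mul_norm_sq_le_re_inner_apply_self (hT : T.IsSymmetric) (hn : finrank 𝕜 E = n)
    {c : ℝ} {s : Set (Fin n)} (hs : ∀ i ∈ s, c ≤ hT.eigenvalues hn i) {x : E}
    (hx : x ∈ span 𝕜 (hT.eigenvectorBasis hn '' s)) : c * ‖x‖ ^ 2 ≤ re ⟪T x, x⟫ := by
  rw [← (hT.eigenvectorBasis hn).repr.norm_map, EuclideanSpace.norm_sq_eq,
    hT.re_inner_apply_self_eq_sum hn, Finset.mul_sum]
  refine Finset.sum_le_sum fun i _ => ?_
  by_cases hi : i ∈ s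
  · gcongr
    exact hs i hi
  · simp [(hT.eigenvectorBasis hn).repr_eq_zero_of_mem_span_image hi hx]

theorem re_inner_apply_self_le_mul_norm_sq (hT : T.IsSymmetric) (hn : finrank 𝕜 E = n)
    {c : ℝ} {s : Set (Fin n)} (hs : ∀ i ∈ s, hT.eigenvalues hn i ≤ c) {x : E}
    (hx : x ∈ span 𝕜 (hT.eigenvectorBasis hn '' s)) : re ⟪T x, x⟫ ≤ c * ‖x‖ ^ 2 := by
  rw [← (hT.eigenvectorBasis hn).repr.norm_map, EuclideanSpace.norm_sq_eq,
    hT.re_inner_apply_self_eq_sum hn, Finset.mul_sum]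
  refine Finset.sum_le_sum fun i _ => ?_
  by_cases hi : i ∈ s
  · gcongr
    exact hs i hi
  · simp [(hT.eigenvectorBasis hn).repr_eq_zero_of_mem_span_image hi hx]

theorem eigenvalues_sub_le_norm_sub {T T' : E →L[𝕜] E} (hT : (T : E →ₗ[𝕜] E).IsSymmetric)
    (hT' : (T' : E →ₗ[𝕜] E).IsSymmetric) (hn : finrank 𝕜 E = n) (i : Fin n) :
    hT.eigenvalues hn i - hT'.eigenvalues hn i ≤ ‖T - T'‖ := by
  set V := span 𝕜 (hT.eigenvectorBasis hn '' (Finset.Iic i : Set (Fin n)))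
  set W := span 𝕜 (hT'.eigenvectorBasis hn '' (Finset.Ici i : Set (Fin n)))
  have hdim : finrank 𝕜 E < finrank 𝕜 V + finrank 𝕜 W := by
    rw [OrthonormalBasis.finrank_span_image, OrthonormalBasis.finrank_span_image, Fin.card_Iic,
      Fin.card_Ici]
    omega
  obtain ⟨x, ⟨hxV, hxW⟩, hx⟩ := exists_mem_ne_zero_of_ne_bot (inf_ne_bot_of_finrank_lt_add hdim)
  have hlower : hT.eigenvalues hn i * ‖x‖ ^ 2 ≤ re ⟪T x, x⟫ :=
    hT.mul_norm_sq_le_re_inner_apply_self hn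
      (fun k hk => hT.eigenvalues_antitone hn (Finset.mem_Iic.1 hk)) hxV
  have hupper : re ⟪T' x, x⟫ ≤ hT'.eigenvalues hn i * ‖x‖ ^ 2 :=
    hT'.re_inner_apply_self_le_mul_norm_sq hn
      (fun k hk => hT'.eigenvalues_antitone hn (Finset.mem_Ici.1 hk)) hxW
  have hnorm : re ⟪(T - T') x, x⟫ ≤ ‖T - T'‖ * ‖x‖ ^ 2 :=
    calc re ⟪(T - T') x, x⟫ ≤ ‖(T - T') x‖ * ‖x‖ := re_inner_le_norm _ _
      _ ≤ ‖T - T'‖ * ‖x‖ * ‖x‖ := by gcongr; exact (T - T').le_opNorm x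
      _ = ‖T - T'‖ * ‖x‖ ^ 2 := by ring
  rw [_root_.sub_apply, inner_sub_left, map_sub] at hnorm
  refine le_of_mul_le_mul_right ?_ (by positivity : 0 < ‖x‖ ^ 2)
  rw [sub_mul]
  linarith

theorem abs_eigenvalues_sub_le_norm_sub {T T' : E →L[𝕜] E} (hT : (T : E →ₗ[𝕜] E).IsSymmetric)
    (hT' : (T' : E →ₗ[𝕜] E).IsSymmetric) (hn : finrank 𝕜 E = n) (i : Fin n) :
    |hT.eigenvalues hn i - hT'.eigenvalues hn i| ≤ ‖T - T'‖ :=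
  abs_sub_le_iff.2 ⟨eigenvalues_sub_le_norm_sub hT hT' hn i,
    norm_sub_rev T T' ▸ eigenvalues_sub_le_norm_sub hT' hT hn i⟩

theorem eigenvalues_eq_comp_rev (hT : T.IsSymmetric) (hn : finrank 𝕜 E = n) {μ : Fin n → ℝ}
    (hμ : Monotone μ) (hr : T.charpoly.roots = Finset.univ.val.map fun j => (μ j : 𝕜)) :
    hT.eigenvalues hn = μ ∘ Fin.rev := by
  refine (hT.eigenvalues_antitone hn).eq_comp_rev_of_map_univ_eq hμ ?_
  refine Multiset.map_injective (ofReal_injective (K := 𝕜)) ?_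
  rw [Multiset.map_map, Multiset.map_map, ← hT.roots_charpoly_eq_eigenvalues hn, hr]
  rfl

end LinearMap.IsSymmetric

namespace Matrix

variable {𝕜 ι : Type*} [RCLike 𝕜] [Fintype ι] [DecidableEq ι]

theorem charpoly_toEuclideanCLM (A : Matrix ι ι 𝕜) :
    ((toEuclideanCLM (𝕜 := 𝕜) A : EuclideanSpace 𝕜 ι →L[𝕜] _) :
      EuclideanSpace 𝕜 ι →ₗ[𝕜] _).charpoly = A.charpoly := by
  rw [coe_toEuclideanCLM_eq_toEuclideanLin, toEuclideanLin_eq_toLin_orthonormal, charpoly_toLin]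

theorem IsHermitian.isSymmetric_toEuclideanCLM {A : Matrix ι ι 𝕜} (hA : A.IsHermitian) :
    ((toEuclideanCLM (𝕜 := 𝕜) A : EuclideanSpace 𝕜 ι →L[𝕜] _) :
      EuclideanSpace 𝕜 ι →ₗ[𝕜] _).IsSymmetric := by
  rwa [coe_toEuclideanCLM_eq_toEuclideanLin, isSymmetric_toEuclideanLin_iff]

end Matrix

/-- Weyl-type Lipschitz bound for increasingly ordered eigenvalues of Hermitian matrices:
if `μA` and `μB` are the nondecreasing enumerations (with multiplicity) of the (real)
eigenvalues of Hermitian matrices `A` and `B`, i.e. monotone tuples whose associated multisets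
are the root multisets of the respective characteristic polynomials, then
`max_j |μA j - μB j| ≤ ‖A - B‖` in the operator norm. -/
theorem weyl_lipschitz_bound_ordered_eigenvalues (n : ℕ)
    (A B : Matrix (Fin n) (Fin n) ℂ) (hA : A.IsHermitian) (hB : B.IsHermitian)
    (μA μB : Fin n → ℝ) (hmA : Monotone μA) (hmB : Monotone μB)
    (hrA : A.charpoly.roots = Finset.univ.val.map (fun j => (μA j : ℂ)))
    (hrB : B.charpoly.roots = Finset.univ.val.map (fun j => (μB j : ℂ))) :
    ∀ j : Fin n, |μA j - μB j| ≤ matrixOpNorm (A - B) := by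
  intro j
  have hn := finrank_euclideanSpace_fin (𝕜 := ℂ) (n := n)
  have hμA := hA.isSymmetric_toEuclideanCLM.eigenvalues_eq_comp_rev hn hmA
    (by rwa [charpoly_toEuclideanCLM])
  have hμB := hB.isSymmetric_toEuclideanCLM.eigenvalues_eq_comp_rev hn hmB
    (by rwa [charpoly_toEuclideanCLM])
  simpa [hμA, hμB, matrixOpNorm] using
    LinearMap.IsSymmetric.abs_eigenvalues_sub_le_norm_sub hA.isSymmetric_toEuclideanCLM
      hB.isSymmetric_toEuclideanCLM hn j.rev
end

section
/- Continuous eigenvalues of Lipschitz families of normal matrices in several parameters are Lipschitz: let U ⊆ ℝ^q be open, let A : U → M_n(ℂ) be locally Lipschitz with respect to the operator norm and such that A(x) is normal for every x ∈ U, let V ⊆ U be open, and let λ : V → ℂ be a continuous function such that λ(x) is an eigenvalue of A(x) for every x ∈ V. Then λ is locally Lipschitz on V. -/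
/-!
The key estimate is the Bauer–Fike bound for normal matrices: every eigenvalue of `B` lies within
`‖B - C‖` of the spectrum of a normal `C`, because the resolvent `(C - z)⁻¹ = cfc (· - z)⁻¹ C`
has norm at most `1 / dist(z, σ(C))`.

Along a segment `γ` inside a ball where `A` is `K`-Lipschitz, `λ (γ u)` therefore lies within
`K ‖γ u - γ t‖` of the finite set `σ(A (γ t))`. As `u → t` this distance tends to `0` while
`λ (γ u) → λ (γ t)`, so the nearby point of the finite spectrum must eventually be `λ (γ t)`
itself. Thus `λ ∘ γ` has right Dini derivative at most `K ‖y - z‖` everywhere, and the fencing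
form of the mean value inequality gives `‖λ y - λ z‖ ≤ K ‖y - z‖`.
-/

open Matrix

open Filter Topology Metric Set

section Selection

variable {α : Type*} [MetricSpace α]

theorem eventually_dist_le_of_exists_mem_finite {ι : Type*} {l : Filter ι} {f : ι → α}
    {g : ι → ℝ} {T : Set α} {p : α} (hT : T.Finite) (hf : Tendsto f l (𝓝 p))
    (hg : Tendsto g l (𝓝 0)) (h : ∀ᶠ i in l, ∃ μ ∈ T, dist (f i) μ ≤ g i) :
    ∀ᶠ i in l, dist (f i) p ≤ g i := by
  obtain ⟨δ, hδ, hball⟩ :=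
    Metric.isOpen_iff.mp (hT.sdiff (t := {p})).isClosed.isOpen_compl p (by simp)
  filter_upwards [h, hf (ball_mem_nhds p (half_pos hδ)), hg (Iio_mem_nhds (half_pos hδ))]
    with i ⟨μ, hμT, hμ⟩ (hfi : dist (f i) p < δ / 2) (hgi : g i < δ / 2)
  suffices μ = p from this ▸ hμ
  by_contra hμp
  refine hball ?_ ⟨hμT, hμp⟩
  rw [mem_ball, dist_comm]
  calc dist p μ ≤ dist p (f i) + dist (f i) μ := dist_triangle _ _ _
    _ < δ / 2 + δ / 2 := add_lt_add_of_lt_of_le (dist_comm p (f i) ▸ hfi) (hμ.trans hgi.le)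
    _ = δ := add_halves δ

theorem dist_le_mul_of_eventually_dist_le {f : ℝ → α} {a b L : ℝ} (hab : a ≤ b)
    (hf : ContinuousOn f (Icc a b))
    (h : ∀ s ∈ Ico a b, ∀ᶠ t in 𝓝[>] s, dist (f t) (f s) ≤ L * (t - s)) :
    dist (f b) (f a) ≤ L * (b - a) := by
  refine image_le_of_liminf_slope_right_le_deriv_boundary (f := fun t => dist (f t) (f a))
    (continuous_dist.comp_continuousOn (hf.prodMk continuousOn_const)) (by simp) (by fun_prop)
    (fun s _ => ((hasDerivAt_id s).sub_const a).const_mul L |>.hasDerivWithinAt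
      |>.congr_deriv (mul_one L))
    (fun s hs r hr => ?_) ⟨hab, le_rfl⟩
  refine ((h s hs).and self_mem_nhdsWithin).mono (fun t ⟨hdist, hst⟩ => ?_) |>.frequently
  rw [slope_def_field, div_lt_iff₀ (sub_pos.2 hst)]
  calc dist (f t) (f a) - dist (f s) (f a) ≤ dist (f t) (f s) := by
        linarith [dist_triangle (f t) (f s) (f a)]
    _ ≤ L * (t - s) := hdist
    _ < r * (t - s) := mul_lt_mul_of_pos_right hr (sub_pos.2 hst)

theorem Convex.dist_le_of_forall_exists_mem_finite {E : Type*} [NormedAddCommGroup E]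
    [NormedSpace ℝ E] {s : Set E} (hs : Convex ℝ s) {f : E → α} (hf : ContinuousOn f s)
    {S : E → Set α} (hS : ∀ x ∈ s, (S x).Finite) {K : ℝ}
    (hclose : ∀ x ∈ s, ∀ y ∈ s, ∃ μ ∈ S x, dist (f y) μ ≤ K * dist y x) {x y : E}
    (hx : x ∈ s) (hy : y ∈ s) : dist (f y) (f x) ≤ K * dist y x := by
  set γ : ℝ → E := fun t => AffineMap.lineMap x y t
  have hγs : MapsTo γ (Icc 0 1) s := fun t ht => hs.lineMap_mem hx hy ht
  have hγ : Continuous γ := AffineMap.lineMap_continuous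
  have hfγ : ContinuousOn (f ∘ γ) (Icc 0 1) := hf.comp hγ.continuousOn hγs
  have hright : ∀ t ∈ Ico (0 : ℝ) 1,
      ∀ᶠ u in 𝓝[>] t, dist (f (γ u)) (f (γ t)) ≤ K * dist y x * (u - t) := by
    intro t ht
    have ht' := Ico_subset_Icc_self ht
    have hIcc : Icc 0 1 ∈ 𝓝[>] t := Icc_mem_nhdsGT_of_mem ht
    have hnear : ∀ᶠ u in 𝓝[>] t, dist (f (γ u)) (f (γ t)) ≤ K * dist (γ u) (γ t) :=
      eventually_dist_le_of_exists_mem_finite (hS _ (hγs ht'))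
        ((hfγ t ht').mono_of_mem_nhdsWithin hIcc)
        ((Continuous.tendsto' (by fun_prop) t 0 (by simp)).mono_left nhdsWithin_le_nhds)
        (by filter_upwards [hIcc] with u hu using hclose _ (hγs ht') _ (hγs hu))
    filter_upwards [hnear, self_mem_nhdsWithin] with u hu (htu : t < u)
    simp only [γ, dist_lineMap_lineMap, Real.dist_eq, abs_of_pos (sub_pos.2 htu), dist_comm x y]
      at hu ⊢
    linear_combination hu
  simpa [γ] using dist_le_mul_of_eventually_dist_le zero_le_one hfγ hright

end Selection

section BauerFike

variable {A : Type*} [CStarAlgebra A]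

theorem IsStarNormal.cfc_inv_sub_mul_sub_algebraMap (a : A) [IsStarNormal a] {z : ℂ}
    (hz : z ∉ spectrum ℂ a) : cfc (fun x => (x - z)⁻¹) a * (a - algebraMap ℂ A z) = 1 := by
  have hsub : ∀ x ∈ spectrum ℂ a, x - z ≠ 0 := fun x hx h => hz (sub_eq_zero.1 h ▸ hx)
  have hsub_cfc : a - algebraMap ℂ A z = cfc (fun x => x - z) a := by
    rw [cfc_sub .., cfc_id' ℂ a, cfc_const z a]
  have hinv : ContinuousOn (fun x => (x - z)⁻¹) (spectrum ℂ a) :=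
    (continuousOn_id.sub continuousOn_const).inv₀ hsub
  rw [hsub_cfc, ← cfc_mul _ _ a hinv]
  exact (cfc_congr fun x hx => inv_mul_cancel₀ (hsub x hx)).trans (cfc_one ℂ a)

theorem IsStarNormal.infDist_spectrum_mul_norm_cfc_inv_sub_le (a : A) [IsStarNormal a] (z : ℂ) :
    infDist z (spectrum ℂ a) * ‖cfc (fun x => (x - z)⁻¹) a‖ ≤ 1 := by
  rcases (infDist_nonneg (x := z) (s := spectrum ℂ a)).eq_or_lt with hd | hd
  · simp [← hd]
  rw [← le_div_iff₀' hd, one_div]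
  refine norm_cfc_le (by positivity) fun x hx => ?_
  rw [norm_inv, ← dist_eq_norm, dist_comm]
  exact inv_anti₀ hd (infDist_le_dist_of_mem hx)

variable {E : Type*} [NormedAddCommGroup E] [InnerProductSpace ℂ E] [CompleteSpace E]

theorem IsStarNormal.infDist_spectrum_mul_norm_le (S : E →L[ℂ] E) [IsStarNormal S] (z : ℂ)
    (w : E) : infDist z (spectrum ℂ S) * ‖w‖ ≤ ‖(S - algebraMap ℂ _ z) w‖ := by
  by_cases hz : z ∈ spectrum ℂ S
  · simp [infDist_zero_of_mem hz]
  set R := cfc (fun x => (x - z)⁻¹) S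
  have hRw : R ((S - algebraMap ℂ _ z) w) = w := by
    rw [← mul_apply_eq_comp, cfc_inv_sub_mul_sub_algebraMap S hz, one_apply_eq_self]
  calc infDist z (spectrum ℂ S) * ‖w‖
      ≤ infDist z (spectrum ℂ S) * (‖R‖ * ‖(S - algebraMap ℂ _ z) w‖) := by
        conv_lhs => rw [← hRw]
        exact mul_le_mul_of_nonneg_left (R.le_opNorm _) infDist_nonneg
    _ = infDist z (spectrum ℂ S) * ‖R‖ * ‖(S - algebraMap ℂ _ z) w‖ := (mul_assoc ..).symm
    _ ≤ ‖(S - algebraMap ℂ _ z) w‖ :=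
        mul_le_of_le_one_left (norm_nonneg _) (infDist_spectrum_mul_norm_cfc_inv_sub_le S z)

theorem IsStarNormal.exists_mem_spectrum_dist_le_norm_sub {S T : E →L[ℂ] E} [IsStarNormal S]
    {z : ℂ} {w : E} (hw : w ≠ 0) (hTw : T w = z • w) :
    ∃ μ ∈ spectrum ℂ S, dist z μ ≤ ‖T - S‖ := by
  have : Nontrivial E := nontrivial_of_ne w 0 hw
  obtain ⟨μ, hμ, hdist⟩ := (spectrum.isCompact S).exists_infDist_eq_dist (spectrum.nonempty S) z
  refine ⟨μ, hμ, hdist ▸ le_of_mul_le_mul_right ?_ (norm_pos_iff.2 hw)⟩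
  calc infDist z (spectrum ℂ S) * ‖w‖ ≤ ‖(S - algebraMap ℂ _ z) w‖ :=
        infDist_spectrum_mul_norm_le S z w
    _ = ‖(T - S) w‖ := by
        simp [hTw, Algebra.algebraMap_eq_smul_one, norm_sub_rev]
    _ ≤ ‖T - S‖ * ‖w‖ := (T - S).le_opNorm w

end BauerFike

theorem Matrix.exists_mem_spectrum_dist_le_matrixOpNorm_sub {n : ℕ}
    {B C : Matrix (Fin n) (Fin n) ℂ} (hC : C * Cᴴ = Cᴴ * C) {z : ℂ} {v : Fin n → ℂ} (hv : v ≠ 0)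
    (hBv : B *ᵥ v = z • v) : ∃ μ ∈ spectrum ℂ C, dist z μ ≤ matrixOpNorm (B - C) := by
  have : IsStarNormal C := ⟨hC.symm⟩
  rw [← AlgEquiv.spectrum_eq (toEuclideanCLM (𝕜 := ℂ) (n := Fin n)) C, matrixOpNorm, map_sub]
  refine IsStarNormal.exists_mem_spectrum_dist_le_norm_sub (w := WithLp.toLp 2 v)
    (by simpa using hv) ?_
  rw [toEuclideanCLM_toLp, hBv, WithLp.toLp_smul]

theorem continuous_eigenvalue_of_lipschitz_normal_family_is_lipschitz_general (n q : ℕ)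
    (U V : Set (EuclideanSpace ℝ (Fin q))) (hV : IsOpen V) (hVU : V ⊆ U)
    (A : EuclideanSpace ℝ (Fin q) → Matrix (Fin n) (Fin n) ℂ)
    (hnormal : ∀ x ∈ U, A x * (A x)ᴴ = (A x)ᴴ * A x)
    (hLip : ∀ x ∈ U, ∃ K : ℝ, ∃ ε : ℝ, 0 < ε ∧ ∀ y ∈ U, ∀ z ∈ U,
      dist y x < ε → dist z x < ε → matrixOpNorm (A y - A z) ≤ K * dist y z)
    (l : EuclideanSpace ℝ (Fin q) → ℂ) (hl : ContinuousOn l V)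
    (heig : ∀ x ∈ V, ∃ v : Fin n → ℂ, v ≠ 0 ∧ (A x) *ᵥ v = l x • v) :
    ∀ x ∈ V, ∃ K : ℝ, ∃ ε : ℝ, 0 < ε ∧ ∀ y ∈ V, ∀ z ∈ V,
      dist y x < ε → dist z x < ε → ‖l y - l z‖ ≤ K * dist y z := by
  intro x hx
  obtain ⟨K, ε₀, hε₀, hK⟩ := hLip x (hVU hx)
  obtain ⟨ε₁, hε₁, hball⟩ := Metric.isOpen_iff.mp hV x hx
  have hsub : ball x (min ε₀ ε₁) ⊆ V := (ball_subset_ball (min_le_right _ _)).trans hball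
  have hlip : ∀ z ∈ ball x (min ε₀ ε₁), ∀ y ∈ ball x (min ε₀ ε₁),
      ∃ μ ∈ spectrum ℂ (A z), dist (l y) μ ≤ K * dist y z := fun z hz y hy => by
    obtain ⟨v, hv, hAv⟩ := heig y (hsub hy)
    obtain ⟨μ, hμ, hdist⟩ :=
      exists_mem_spectrum_dist_le_matrixOpNorm_sub (hnormal z (hVU (hsub hz))) hv hAv
    exact ⟨μ, hμ, hdist.trans <| hK y (hVU (hsub hy)) z (hVU (hsub hz))
      ((mem_ball.1 hy).trans_le (min_le_left _ _)) ((mem_ball.1 hz).trans_le (min_le_left _ _))⟩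
  refine ⟨K, min ε₀ ε₁, lt_min hε₀ hε₁, fun y _ z _ hy hz => ?_⟩
  rw [← dist_eq_norm]
  exact (convex_ball x _).dist_le_of_forall_exists_mem_finite (hl.mono hsub)
    (fun y _ => (A y).finite_spectrum) hlip hz hy

/-- Continuous eigenvalues of locally Lipschitz (operator norm) families of normal matrices in
several real parameters are locally Lipschitz: if `A : U → M_n(ℂ)` is locally Lipschitz on an
open set `U ⊆ ℝ^q` with `A x` normal for every `x ∈ U`, `V ⊆ U` is open, and `λ : V → ℂ` is
continuous with `λ x` an eigenvalue of `A x` for every `x ∈ V`, then `λ` is locally Lipschitz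
on `V`. -/
theorem continuous_eigenvalue_of_lipschitz_normal_family_is_lipschitz (n q : ℕ)
    (U V : Set (EuclideanSpace ℝ (Fin q))) (hU : IsOpen U) (hV : IsOpen V) (hVU : V ⊆ U)
    (A : EuclideanSpace ℝ (Fin q) → Matrix (Fin n) (Fin n) ℂ)
    (hnormal : ∀ x ∈ U, A x * (A x)ᴴ = (A x)ᴴ * A x)
    (hLip : ∀ x ∈ U, ∃ K : ℝ, ∃ ε : ℝ, 0 < ε ∧ ∀ y ∈ U, ∀ z ∈ U,
      dist y x < ε → dist z x < ε → matrixOpNorm (A y - A z) ≤ K * dist y z)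
    (l : EuclideanSpace ℝ (Fin q) → ℂ) (hl : ContinuousOn l V)
    (heig : ∀ x ∈ V, ∃ v : Fin n → ℂ, v ≠ 0 ∧ (A x) *ᵥ v = l x • v) :
    ∀ x ∈ V, ∃ K : ℝ, ∃ ε : ℝ, 0 < ε ∧ ∀ y ∈ V, ∀ z ∈ V,
      dist y x < ε → dist z x < ε → ‖l y - l z‖ ≤ K * dist y z :=
  continuous_eigenvalue_of_lipschitz_normal_family_is_lipschitz_general n q U V hV hVU A hnormal
    hLip l hl heig
end

section
/- The single eigenvalues cannot in general be chosen continuously in two real parameters: define A : ℂ → M_2(ℂ) by A(x) = [[0, x],[|x|, 0]]. Then A(x) is normal for every x ∈ ℂ, the map A is locally Lipschitz (indeed Lipschitz), the characteristic polynomial of A(x) is z² − x|x|, and for every neighborhood W of 0 in ℂ there do NOT exist continuous functions λ₁, λ₂ : W → ℂ such that for every x ∈ W the multiset {λ₁(x), λ₂(x)} equals the multiset of roots with multiplicity of z² − x|x|. -/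
/-!
On the circle `|x| = r` the roots of `z² - x|x|` are the square roots of `r x`, so a continuous
eigenvalue `λ₁` near `0` would make `θ ↦ λ₁(r e^{iθ})` a continuous square root of `r² e^{iθ}`
on `ℝ`. Since `ℝ` is connected, it equals `r e^{iθ/2}` or `-r e^{iθ/2}` with a fixed sign. This
is absurd: `λ₁(r e^{iθ})` is `2π`-periodic in `θ`, while `± r e^{iθ/2}` changes sign after one
turn. The remaining claims are computations with the antidiagonal matrix `[[0, a], [b, 0]]`,
whose operator norm is `max |a| |b|` because `AᴴA = diag(|b|², |a|²)`.
-/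

open Matrix Polynomial

/-- The family of matrices `A(x) = [[0, x], [|x|, 0]]`, for `x ∈ ℂ ≅ ℝ²`. -/
noncomputable def Aex (x : ℂ) : Matrix (Fin 2) (Fin 2) ℂ :=
  !![0, x; (‖x‖ : ℂ), 0]

open Metric Real

theorem antidiag_mul_conjTranspose_comm {R : Type*} [CommSemiring R] [StarRing R] {a b : R}
    (h : star a * a = star b * b) :
    !![0, a; b, 0] * (!![0, a; b, 0])ᴴ = (!![0, a; b, 0])ᴴ * !![0, a; b, 0] := by
  ext i j
  fin_cases i <;> fin_cases j <;> simp [Matrix.mul_apply, h, mul_comm _ (star _)]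

theorem charpoly_antidiag {R : Type*} [CommRing R] (a b : R) :
    (!![0, a; b, 0]).charpoly = X ^ 2 - C (a * b) := by
  simp [Matrix.charpoly, Matrix.det_fin_two]
  ring

open scoped Matrix.Norms.L2Operator in
theorem matrixOpNorm_antidiag (a b : ℂ) : matrixOpNorm !![0, a; b, 0] = max ‖a‖ ‖b‖ := by
  have hsq : (!![0, a; b, 0])ᴴ * !![0, a; b, 0] = diagonal ![(‖b‖ ^ 2 : ℂ), ‖a‖ ^ 2] := by
    ext i j
    fin_cases i <;> fin_cases j <;> simp [Matrix.mul_apply, ← Complex.conj_mul']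
  have : matrixOpNorm !![0, a; b, 0] ^ 2 = max ‖a‖ ‖b‖ ^ 2 := by
    rw [matrixOpNorm, l2_opNorm_toEuclideanCLM, sq, ← l2_opNorm_conjTranspose_mul_self, hsq,
      l2_opNorm_diagonal]
    simp only [Pi.norm_def, Fin.univ_succ]
    rcases le_total ‖a‖ ‖b‖ with h | h <;> simp [h, pow_le_pow_left₀ (norm_nonneg _) h]
  exact (pow_left_inj₀ (norm_nonneg _) (by positivity) two_ne_zero).mp this

theorem not_forall_sq_eq_const_mul_on_sphere {r : ℝ} (hr : 0 < r) {c : ℂ} (hc : c ≠ 0)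
    {f : ℂ → ℂ} (hf : ContinuousOn f (sphere 0 r)) :
    ¬ ∀ z ∈ sphere (0 : ℂ) r, f z ^ 2 = c * z := by
  intro hsq
  obtain ⟨w, hw⟩ := IsAlgClosed.exists_pow_nat_eq (c * r) two_pos
  have hw0 : w ≠ 0 := by rintro rfl; simp [hc, hr.ne'] at hw
  set p : ℝ → ℂ := fun θ => r * Complex.exp (θ * Complex.I)
  have hp : ∀ θ, p θ ∈ sphere (0 : ℂ) r := fun θ => by
    simp [p, Complex.norm_exp_ofReal_mul_I, abs_of_pos hr]
  set g : ℝ → ℂ := fun θ => w * Complex.exp (θ / 2 * Complex.I)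
  have hfg : ∀ θ, f (p θ) ^ 2 = g θ ^ 2 := fun θ => by
    rw [hsq _ (hp θ), mul_pow, hw, ← Complex.exp_nat_mul]
    push_cast [p]
    ring_nf
  have hg0 : ∀ θ, g θ ≠ 0 := fun θ => mul_ne_zero hw0 (Complex.exp_ne_zero _)
  have hp_period : p (2 * π) = p 0 := by simp [p, Complex.exp_two_pi_mul_I]
  have hg_antiperiod : g (2 * π) = -g 0 := by
    simp [g, mul_div_cancel_left₀, Complex.exp_pi_mul_I]
  have hfp : Continuous (f ∘ p) := hf.comp_continuous (by fun_prop) hp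
  rcases isPreconnected_univ.eq_or_eq_neg_of_sq_eq hfp.continuousOn
    (by fun_prop : Continuous g).continuousOn (fun θ _ => hfg θ) (fun _ => hg0 _) with h | h
  all_goals
    have h2π := h (Set.mem_univ (2 * π))
    have h0 := h (Set.mem_univ 0)
    simp only [Function.comp_apply, hp_period, hg_antiperiod, Pi.neg_apply] at h2π h0
  · exact hg0 0 (by linear_combination (h2π - h0) / 2)
  · exact hg0 0 (by linear_combination (h0 - h2π) / 2)

theorem sq_eq_of_mem_roots_X_sq_sub_C {R : Type*} [CommRing R] [IsDomain R] {a z : R}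
    (h : z ∈ (X ^ 2 - C a).roots) : z ^ 2 = a := by
  simpa using (mem_roots_sub_C'.mp h).2

theorem matrixOpNorm_Aex_sub (x y : ℂ) : matrixOpNorm (Aex x - Aex y) = ‖x - y‖ := by
  have hsub : Aex x - Aex y = !![0, x - y; ((‖x‖ - ‖y‖ : ℝ) : ℂ), 0] := by
    ext i j
    fin_cases i <;> fin_cases j <;> simp [Aex]
  rw [hsub, matrixOpNorm_antidiag, Complex.norm_real, Real.norm_eq_abs,
    max_eq_left (abs_norm_sub_norm_le x y)]

/-- The single eigenvalues cannot in general be chosen continuously in two real parameters: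
for `A(x) = [[0, x], [|x|, 0]]`, every `A(x)` is normal, `A` is (globally) Lipschitz with
respect to the operator norm, the characteristic polynomial of `A(x)` is `z² - x·|x|`, and on
no neighborhood `W` of `0` in `ℂ` do there exist continuous functions `λ₁, λ₂ : W → ℂ`
parameterizing the roots of `z² - x·|x|` with multiplicity. -/
theorem eigenvalues_not_continuously_choosable :
    (∀ x : ℂ, Aex x * (Aex x)ᴴ = (Aex x)ᴴ * Aex x) ∧
    (∃ K : ℝ, ∀ x y : ℂ, matrixOpNorm (Aex x - Aex y) ≤ K * ‖x - y‖) ∧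
    (∀ x : ℂ, (Aex x).charpoly = X ^ 2 - C (x * (‖x‖ : ℂ))) ∧
    (∀ W : Set ℂ, W ∈ nhds (0 : ℂ) →
      ¬ ∃ l₁ l₂ : ℂ → ℂ, ContinuousOn l₁ W ∧ ContinuousOn l₂ W ∧
        ∀ x ∈ W, (X ^ 2 - C (x * (‖x‖ : ℂ)) : Polynomial ℂ).roots =
          {l₁ x, l₂ x}) := by
  refine ⟨fun x => antidiag_mul_conjTranspose_comm ?_, ⟨1, fun x y => by
    rw [matrixOpNorm_Aex_sub, one_mul]⟩, fun x => charpoly_antidiag x ‖x‖, ?_⟩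
  · simp [Complex.conj_mul', sq]
  rintro W hW ⟨l₁, _, hl₁, -, hroots⟩
  obtain ⟨ε, hε, hball⟩ := Metric.mem_nhds_iff.mp hW
  have hsphere : sphere (0 : ℂ) (ε / 2) ⊆ W := (sphere_subset_ball (half_lt_self hε)).trans hball
  refine not_forall_sq_eq_const_mul_on_sphere (half_pos hε) (c := ((ε / 2 : ℝ) : ℂ))
    (by exact_mod_cast (half_pos hε).ne') (hl₁.mono hsphere) fun z hz => ?_
  rw [mul_comm, ← mem_sphere_zero_iff_norm.mp hz]
  refine sq_eq_of_mem_roots_X_sq_sub_C ?_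
  rw [hroots z (hsphere hz)]
  exact Multiset.mem_cons_self _ _
end

section
/- Eigenvectors cannot be chosen with locally bounded derivatives: define A : ℝ² → M_2(ℝ) by A(x,y) = [[x, y],[y, −x]]; its eigenvalues are ±√(x²+y²). Then for every neighborhood W of the origin in ℝ² there does NOT exist a map v : W ∖ {0} → ℝ² such that v is differentiable at every point of W ∖ {0}, the derivative of v is bounded on W ∖ {0}, and for every p = (x,y) ∈ W ∖ {0} one has ‖v(p)‖ = 1 and A(p) v(p) = √(x²+y²) · v(p). -/
open Matrix Polynomial

/-- The family of real symmetric matrices `A(x,y) = [[x, y], [y, -x]]`. -/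
def Asym (p : ℝ × ℝ) : Matrix (Fin 2) (Fin 2) ℝ :=
  !![p.1, p.2; p.2, -p.1]

/-!
On the circle `p = (R cos θ, R sin θ)` the matrix `A(p)` is `R` times the reflection in the line
of angle `θ / 2`, so a unit eigenvector for `R = √(x² + y²)` is `±(cos (θ/2), sin (θ/2))`.
Following a continuous choice once around the circle turns `(cos (θ/2), sin (θ/2))` into its
negative, so the sign `⟪v, (cos (θ/2), sin (θ/2))⟫ = ±1` would have to change, contradicting the
intermediate value theorem.
-/

open Real Set

theorem Asym_charpoly (p : ℝ × ℝ) : (Asym p).charpoly = X ^ 2 - C (p.1 ^ 2 + p.2 ^ 2) := by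
  rw [charpoly, det_fin_two]
  simp only [Asym, charmatrix_apply_eq, charmatrix_apply_ne, of_apply, cons_val', cons_val_zero,
    cons_val_fin_one, cons_val_one, ne_eq, zero_ne_one, one_ne_zero, not_false_eq_true, map_neg,
    map_add, map_pow]
  ring

theorem ContinuousOn.exists_eq_zero_of_apply_eq_neg {f : ℝ → ℝ} {a b : ℝ}
    (hf : ContinuousOn f (uIcc a b)) (hab : f b = -f a) : ∃ c ∈ uIcc a b, f c = 0 := by
  have hzero : (0 : ℝ) ∈ uIcc (f a) (f b) := by
    rw [hab, mem_uIcc]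
    rcases le_total (f a) 0 with h | h
    · exact Or.inl ⟨h, by linarith⟩
    · exact Or.inr ⟨by linarith, h⟩
  exact intermediate_value_uIcc hf hzero

noncomputable def circlePoint (R θ : ℝ) : ℝ × ℝ := (R * cos θ, R * sin θ)

theorem continuous_circlePoint (R : ℝ) : Continuous (circlePoint R) := by
  unfold circlePoint
  fun_prop

theorem circlePoint_sq_add_sq (R θ : ℝ) :
    (circlePoint R θ).1 ^ 2 + (circlePoint R θ).2 ^ 2 = R ^ 2 := by
  simp only [circlePoint]
  linear_combination R ^ 2 * sin_sq_add_cos_sq θ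

theorem norm_circlePoint_le (R θ : ℝ) : ‖circlePoint R θ‖ ≤ |R| := by
  simp only [circlePoint, Prod.norm_def, norm_mul, Real.norm_eq_abs]
  exact max_le (mul_le_of_le_one_right (abs_nonneg R) (abs_cos_le_one θ))
    (mul_le_of_le_one_right (abs_nonneg R) (abs_sin_le_one θ))

theorem circlePoint_ne_zero {R : ℝ} (hR : R ≠ 0) (θ : ℝ) : circlePoint R θ ≠ 0 := by
  intro h
  have := circlePoint_sq_add_sq R θ
  simp only [h, Prod.fst_zero, Prod.snd_zero] at this
  exact hR (pow_eq_zero_iff two_ne_zero |>.mp (by linarith))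

theorem circlePoint_two_pi (R : ℝ) : circlePoint R (2 * π) = circlePoint R 0 := by
  simp [circlePoint]

theorem exists_circlePoint_mem_diff_zero {W : Set (ℝ × ℝ)} (hW : W ∈ nhds 0) :
    ∃ R > 0, ∀ θ, circlePoint R θ ∈ W \ {0} := by
  obtain ⟨r, hr, hball⟩ := Metric.mem_nhds_iff.mp hW
  refine ⟨r / 2, half_pos hr, fun θ => ⟨hball ?_, circlePoint_ne_zero (half_pos hr).ne' θ⟩⟩
  rw [mem_ball_zero_iff]
  calc ‖circlePoint (r / 2) θ‖ ≤ |r / 2| := norm_circlePoint_le _ _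
    _ < r := by rw [abs_of_pos (half_pos hr)]; linarith

theorem Asym_circlePoint_eigenvector_mul_sin_half_eq {R θ : ℝ} {u : Fin 2 → ℝ} (hR : R ≠ 0)
    (hu : Asym (circlePoint R θ) *ᵥ u = R • u) :
    u 0 * sin (θ / 2) = u 1 * cos (θ / 2) := by
  have h0 := congrFun hu 0
  have h1 := congrFun hu 1
  simp only [mulVec, dotProduct, Asym, circlePoint, of_apply, cons_val', cons_val_fin_one,
    cons_val_zero, Fin.sum_univ_two, cons_val_one, Pi.smul_apply, smul_eq_mul, neg_mul] at h0 h1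
  have e0 : cos θ * u 0 + sin θ * u 1 = u 0 := mul_left_cancel₀ hR (by linear_combination h0)
  have e1 : sin θ * u 0 - cos θ * u 1 = u 1 := mul_left_cancel₀ hR (by linear_combination h1)
  have hcos : cos θ = cos (θ / 2) ^ 2 - sin (θ / 2) ^ 2 := by
    have h := cos_two_mul (θ / 2)
    rw [mul_div_cancel₀ θ two_ne_zero] at h
    linear_combination h + sin_sq_add_cos_sq (θ / 2)
  have hsin : sin θ = 2 * sin (θ / 2) * cos (θ / 2) := by
    rw [← sin_two_mul, mul_div_cancel₀ θ two_ne_zero]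
  rw [hcos, hsin] at e0 e1
  linear_combination (-sin (θ / 2) / 2) * e0 + (cos (θ / 2) / 2) * e1
    + ((u 1 * cos (θ / 2) - u 0 * sin (θ / 2)) / 2) * sin_sq_add_cos_sq (θ / 2)

theorem Asym_circlePoint_unit_eigenvector_halfAngle_sq {R θ : ℝ} {u : Fin 2 → ℝ} (hR : R ≠ 0)
    (hunit : u 0 ^ 2 + u 1 ^ 2 = 1) (hu : Asym (circlePoint R θ) *ᵥ u = R • u) :
    (u 0 * cos (θ / 2) + u 1 * sin (θ / 2)) ^ 2 = 1 := by
  have hperp := Asym_circlePoint_eigenvector_mul_sin_half_eq hR hu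
  -- Lagrange's identity, with the perpendicular component `u 0 * sin - u 1 * cos` vanishing
  linear_combination (u 1 * cos (θ / 2) - u 0 * sin (θ / 2)) * hperp
    + hunit + (u 0 ^ 2 + u 1 ^ 2) * (sin_sq_add_cos_sq (θ / 2))

/-- Eigenvectors cannot be chosen with locally bounded derivatives: for
`A(x,y) = [[x, y], [y, -x]]` (whose eigenvalues are `±√(x²+y²)`), on no neighborhood `W` of
the origin does there exist a choice `v` of unit eigenvectors for the eigenvalue `√(x²+y²)`
on `W ∖ {0}` which is differentiable with bounded derivative on `W ∖ {0}`. -/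
theorem eigenvectors_not_boundedly_differentiable :
    (∀ p : ℝ × ℝ, (Asym p).charpoly = X ^ 2 - C (p.1 ^ 2 + p.2 ^ 2)) ∧
    ∀ W : Set (ℝ × ℝ), W ∈ nhds (0 : ℝ × ℝ) →
      ¬ ∃ v : ℝ × ℝ → (Fin 2 → ℝ),
          (∀ p ∈ W \ {(0 : ℝ × ℝ)}, DifferentiableAt ℝ v p) ∧
          (∃ C : ℝ, ∀ p ∈ W \ {(0 : ℝ × ℝ)}, ‖fderiv ℝ v p‖ ≤ C) ∧
          (∀ p ∈ W \ {(0 : ℝ × ℝ)},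
            (v p 0) ^ 2 + (v p 1) ^ 2 = 1 ∧
            (Asym p) *ᵥ (v p) = Real.sqrt (p.1 ^ 2 + p.2 ^ 2) • v p) := by
  refine ⟨Asym_charpoly, fun W hW ⟨v, hdiff, _, heig⟩ => ?_⟩
  obtain ⟨R, hR, hmem⟩ := exists_circlePoint_mem_diff_zero hW
  let u : ℝ → Fin 2 → ℝ := fun θ => v (circlePoint R θ)
  let f : ℝ → ℝ := fun θ => u θ 0 * cos (θ / 2) + u θ 1 * sin (θ / 2)
  have hu : Continuous u := continuous_iff_continuousAt.mpr fun θ =>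
    (hdiff _ (hmem θ)).continuousAt.comp (continuous_circlePoint R).continuousAt
  have hf : Continuous f := by fun_prop
  have hf_sq (θ : ℝ) : f θ ^ 2 = 1 := by
    obtain ⟨hunit, hv⟩ := heig _ (hmem θ)
    rw [circlePoint_sq_add_sq, sqrt_sq hR.le] at hv
    exact Asym_circlePoint_unit_eigenvector_halfAngle_sq hR.ne' hunit hv
  have hf_two_pi : f (2 * π) = -f 0 := by
    simp [f, u, circlePoint_two_pi, mul_div_cancel_left₀ π two_ne_zero]
  obtain ⟨θ, -, hθ⟩ := hf.continuousOn.exists_eq_zero_of_apply_eq_neg hf_two_pi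
  simpa [hθ] using hf_sq θ
end
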